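/- arXiv:2304.05790 — 2 statements merged into one kernel-verified Lean document; each statement's English description precedes it below -/
import Mathlib

section
/- Proposition 2.6 (cost of compositions): Let p ∈ [1,∞], n ∈ ℕ, d_1, d_2, …, d_{n+1} ∈ ℕ, L_1, L_2, …, L_n ∈ (0,∞); for every i ∈ {1,…,n} let Q_i ⊆ ℝ^{d_i} be a d_i-dimensional hypercube and let f_i ∈ C(Q_i, ℝ^{d_{i+1}}) satisfy f_i(Q_i) ⊆ Q_{i+1} for all i ∈ {1,…,n−1}. Then for all ε ∈ [0,∞): Cost_p(f_n ∘ f_{n−1} ∘ ⋯ ∘ f_1, ∏_{i=1}^n L_i, ε) ≤ 6·∑_{i=2}^n d_i(d_i+1) + 3·∑_{i=1}^n Cost_p(f_i, L_i, ε·n^{−1}·(∏_{j=i+1}^n L_j)^{−1}). -/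
open scoped BigOperators ENNReal

noncomputable section

/-- A ReLU deep neural network with `L + 1` affine layers (so depth at least one),
layer dimensions `ℓ 0, ℓ 1, …, ℓ (L + 1)`, weight matrices `W k` and bias vectors `b k`
(values of `ℓ`, `W`, `b` beyond layer index `L` are irrelevant for the realization
and for the number of parameters). -/
structure DNN where
  L : ℕ
  ℓ : ℕ → ℕ
  W : (k : ℕ) → Matrix (Fin (ℓ (k + 1))) (Fin (ℓ k)) ℝ
  b : (k : ℕ) → Fin (ℓ (k + 1)) → ℝ

namespace DNN

/-- The number of parameters `P(Φ) = ∑_{k=1}^{L} ℓ_k (ℓ_{k-1} + 1)` of a DNN. -/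
def params (Φ : DNN) : ℕ :=
  ∑ k ∈ Finset.range (Φ.L + 1), Φ.ℓ (k + 1) * (Φ.ℓ k + 1)

/-- The `k`-th affine layer function `x ↦ W_k x + b_k`. -/
def affine (Φ : DNN) (k : ℕ) (x : Fin (Φ.ℓ k) → ℝ) : Fin (Φ.ℓ (k + 1)) → ℝ :=
  fun i => (∑ j, Φ.W k i j * x j) + Φ.b k i

/-- The value after `k` affine layers, each followed by the ReLU activation. -/
def hidden (Φ : DNN) : (k : ℕ) → (Fin (Φ.ℓ 0) → ℝ) → (Fin (Φ.ℓ k) → ℝ)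
  | 0 => id
  | k + 1 => fun x i => max (affine Φ k (hidden Φ k x) i) 0

/-- The realization `R(Φ)`: all affine layers with ReLU in between (no activation after
the last affine layer). -/
def realize (Φ : DNN) (x : Fin (Φ.ℓ 0) → ℝ) : Fin (Φ.ℓ (Φ.L + 1)) → ℝ :=
  affine Φ Φ.L (hidden Φ Φ.L x)

/-- `Φ.Realizes f` means that the realization of `Φ` is the function `f : ℝ^m → ℝ^n`
(in particular the input and output dimensions of `Φ` are `m` and `n`). -/
def Realizes (Φ : DNN) {m n : ℕ} (f : (Fin m → ℝ) → (Fin n → ℝ)) : Prop :=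
  ∃ (hm : Φ.ℓ 0 = m) (hn : Φ.ℓ (Φ.L + 1) = n),
    ∀ (x : Fin m → ℝ) (i : Fin n),
      f x i = realize Φ (fun j => x (Fin.cast hm j)) (Fin.cast hn.symm i)

end DNN

/-- The `ℓ^p`-norm on `ℝ^k` for `p ∈ [1,∞]`. -/
def lpNorm (p : ℝ≥0∞) {k : ℕ} (x : Fin k → ℝ) : ℝ :=
  if p = ∞ then ⨆ i, |x i| else (∑ i, |x i| ^ p.toReal) ^ (1 / p.toReal)

/-- The hypercube `[a,b]^d ⊆ ℝ^d`. -/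
def cube (d : ℕ) (a b : ℝ) : Set (Fin d → ℝ) :=
  Set.Icc (fun _ => a) (fun _ => b)

/-- `Cost p D f L ε`: the minimal number of parameters of a DNN whose realization
approximates `f` on `D` up to `ε` in the `ℓ^p`-norm and is `L`-Lipschitz on `D`
with respect to the `ℓ^p`-norm; `∞` if no such DNN exists. -/
def Cost (p : ℝ≥0∞) {m n : ℕ} (D : Set (Fin m → ℝ))
    (f : (Fin m → ℝ) → (Fin n → ℝ)) (L ε : ℝ) : ℝ≥0∞ :=
  sInf { N : ℝ≥0∞ | ∃ Φ : DNN, ∃ g : (Fin m → ℝ) → (Fin n → ℝ),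
    Φ.Realizes g ∧ N = (Φ.params : ℝ≥0∞) ∧
    (∀ x ∈ D, lpNorm p (g x - f x) ≤ ε) ∧
    (∀ x ∈ D, ∀ y ∈ D, lpNorm p (g x - g y) ≤ L * lpNorm p (x - y)) }

/-- Given block sizes `d : Fin n → ℕ`, the index in `Fin (∑ j, d j)` of the `l`-th
coordinate of the `i`-th block (blocks are arranged consecutively). -/
def blockIdx {n : ℕ} (d : Fin n → ℕ) (i : Fin n) (l : Fin (d i)) : Fin (∑ j, d j) :=
  ⟨(∑ j ∈ Finset.univ.filter (fun j => j < i), d j) + l.1, by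
    have h1 : l.1 < d i := l.2
    have h2 : (∑ j ∈ Finset.univ.filter (fun j => j < i), d j) + d i ≤ ∑ j, d j := by
      have hsplit := Finset.sum_filter_add_sum_filter_not Finset.univ (fun j => j < i) d
      have h3 : d i ≤ ∑ j ∈ Finset.univ.filter (fun j => ¬ j < i), d j :=
        Finset.single_le_sum (fun _ _ => Nat.zero_le _) (by simp)
      omega
    omega⟩

/-- The class `𝒫_{k,p}([a,b]^d, L)`: parallelizations `f = f_1 □ ⋯ □ f_m` of real-valued
functions `f_i` of at most `k` variables that are `L`-Lipschitz w.r.t. the `ℓ^p`-norm. -/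
def MemPLip (k : ℕ) (p : ℝ≥0∞) (a b L : ℝ) {d m : ℕ}
    (f : (Fin d → ℝ) → (Fin m → ℝ)) : Prop :=
  ∃ (dims : Fin m → ℕ) (hd : ∑ i, dims i = d) (g : ∀ i, (Fin (dims i) → ℝ) → ℝ),
    (∀ i, 0 < dims i) ∧ (∀ i, dims i ≤ k) ∧
    (∀ i, ∀ x ∈ cube (dims i) a b, ∀ y ∈ cube (dims i) a b,
      |g i x - g i y| ≤ L * lpNorm p (x - y)) ∧
    (∀ x ∈ cube d a b, ∀ i : Fin m,
      f x i = g i (fun l => x (Fin.cast hd (blockIdx dims i l))))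

/-- The class `M([a,b]^d)`: parallelizations of maximum functions `m_{d_1} □ ⋯ □ m_{d_m}`. -/
def MemMaxClass (a b : ℝ) {d m : ℕ} (f : (Fin d → ℝ) → (Fin m → ℝ)) : Prop :=
  ∃ (dims : Fin m → ℕ) (hd : ∑ i, dims i = d),
    (∀ i, 0 < dims i) ∧
    (∀ x ∈ cube d a b, ∀ i : Fin m,
      f x i = ⨆ l : Fin (dims i), x (Fin.cast hd (blockIdx dims i l)))

/-- The class `P([a,b]^d)`: parallelizations of product functions `p_{d_1} □ ⋯ □ p_{d_m}`. -/
def MemProdClass (a b : ℝ) {d m : ℕ} (f : (Fin d → ℝ) → (Fin m → ℝ)) : Prop :=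
  ∃ (dims : Fin m → ℕ) (hd : ∑ i, dims i = d),
    (∀ i, 0 < dims i) ∧
    (∀ x ∈ cube d a b, ∀ i : Fin m,
      f x i = ∏ l : Fin (dims i), x (Fin.cast hd (blockIdx dims i l)))

/-- `f` coincides on `[a,b]^d` with the extended maximum function
`𝔪_d(x) = (max{x_1}, max{x_1,x_2}, …, max{x_1,…,x_d})`. -/
def IsExtMaxOn (a b : ℝ) {d m : ℕ} (f : (Fin d → ℝ) → (Fin m → ℝ)) : Prop :=
  ∃ h : d = m, ∀ x ∈ cube d a b, ∀ i : Fin m,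
    f x i = (Finset.Iic (Fin.cast h.symm i)).sup' Finset.nonempty_Iic x

/-- `f` coincides on `[a,b]^d` with the extended product function
`𝔭_d(x) = (x_1, x_1 x_2, …, x_1 ⋯ x_d)`. -/
def IsExtProdOn (a b : ℝ) {d m : ℕ} (f : (Fin d → ℝ) → (Fin m → ℝ)) : Prop :=
  ∃ h : d = m, ∀ x ∈ cube d a b, ∀ i : Fin m,
    f x i = ∏ j ∈ Finset.Iic (Fin.cast h.symm i), x j

/-- Iterated composition: `compSeq dims f k = f_{k-1} ∘ ⋯ ∘ f_1 ∘ f_0`. -/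
def compSeq (dims : ℕ → ℕ) (f : ∀ i : ℕ, (Fin (dims i) → ℝ) → (Fin (dims (i + 1)) → ℝ)) :
    (k : ℕ) → (Fin (dims 0) → ℝ) → (Fin (dims k) → ℝ)
  | 0 => id
  | k + 1 => fun x => f k (compSeq dims f k x)

/-!
Realize each `f_i` up to `ε_i` by a network `Φ_i`, and chain the networks, inserting before each
`Φ_i` (`i ≥ 1`) an exact ReLU network for the projection onto the cube `Q_i`. The projection is
`1`-Lipschitz and fixes `Q_i`, which contains the exact intermediate values; hence the errors obey
`δ_{i+1} ≤ L_i δ_i + ε_i` and the Lipschitz constants multiply. With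
`ε_i = ε n⁻¹ (∏_{j>i} L_j)⁻¹` every term of `δ_n = ∑_i ε_i ∏_{j>i} L_j` equals `ε / n`.
Merging adjacent affine layers, the projection network costs `d_i (2 d_i + 1)` parameters plus a
second copy of the last layer of the network before it, so the chain has at most
`2 ∑ P(Φ_i) + ∑_{i ≥ 1} d_i (2 d_i + 1)` parameters.
-/

open Finset Matrix

lemma lpNorm_eq_norm {p : ℝ≥0∞} [Fact (1 ≤ p)] {k : ℕ} (x : Fin k → ℝ) :
    lpNorm p x = ‖WithLp.toLp p x‖ := by
  unfold lpNorm
  split_ifs with hp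
  · subst hp
    simp [PiLp.norm_eq_ciSup]
  · have hp' : 0 < p.toReal :=
      ENNReal.toReal_pos (zero_lt_one.trans_le Fact.out).ne' hp
    simp [PiLp.norm_eq_sum hp']

lemma lpNorm_sub_le {p : ℝ≥0∞} (hp : 1 ≤ p) {k : ℕ} (x y z : Fin k → ℝ) :
    lpNorm p (x - z) ≤ lpNorm p (x - y) + lpNorm p (y - z) := by
  have : Fact (1 ≤ p) := ⟨hp⟩
  simp only [lpNorm_eq_norm, WithLp.toLp_sub]
  exact norm_sub_le_norm_sub_add_norm_sub _ _ _

lemma lpNorm_mono (p : ℝ≥0∞) {k : ℕ} {x y : Fin k → ℝ}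
    (h : ∀ i, |x i| ≤ |y i|) : lpNorm p x ≤ lpNorm p y := by
  unfold lpNorm
  split
  · exact Real.iSup_le
      (fun i => (h i).trans (le_ciSup (f := fun i => |y i|) (Finite.bddAbove_range _) i))
      (Real.iSup_nonneg fun i => abs_nonneg _)
  · exact Real.rpow_le_rpow (by positivity)
      (sum_le_sum fun i _ => Real.rpow_le_rpow (abs_nonneg _) (h i) ENNReal.toReal_nonneg)
      (by positivity)

def LpLipschitzOn (p : ℝ≥0∞) (K : ℝ) {m n : ℕ} (D : Set (Fin m → ℝ))
    (g : (Fin m → ℝ) → (Fin n → ℝ)) : Prop :=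
  ∀ x ∈ D, ∀ y ∈ D, lpNorm p (g x - g y) ≤ K * lpNorm p (x - y)

def projCube (a b : ℝ) {d : ℕ} (x : Fin d → ℝ) : Fin d → ℝ := fun i => min (max (x i) a) b

section projCube

variable {p : ℝ≥0∞} {d r : ℕ} {a b K ε : ℝ} {f g : (Fin d → ℝ) → (Fin r → ℝ)}

lemma projCube_mem (hab : a ≤ b) (x : Fin d → ℝ) : projCube a b x ∈ cube d a b :=
  ⟨fun _ => le_min (le_max_right _ _) hab, fun _ => min_le_right _ _⟩

lemma projCube_of_mem {x : Fin d → ℝ} (hx : x ∈ cube d a b) : projCube a b x = x :=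
  funext fun i => by rw [projCube, max_eq_left (hx.1 i), min_eq_left (hx.2 i)]

lemma lpNorm_projCube_sub_le (x y : Fin d → ℝ) :
    lpNorm p (projCube a b x - projCube a b y) ≤ lpNorm p (x - y) :=
  lpNorm_mono p fun i => (abs_min_sub_min_le_max _ _ _ _).trans <| by
    simpa using abs_max_sub_max_le_abs (x i) (y i) a

lemma lpNorm_comp_projCube_sub_le (hab : a ≤ b) (hK : 0 ≤ K)
    (hg : LpLipschitzOn p K (cube d a b) g) (u v : Fin d → ℝ) :
    lpNorm p (g (projCube a b u) - g (projCube a b v)) ≤ K * lpNorm p (u - v) :=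
  (hg _ (projCube_mem hab u) _ (projCube_mem hab v)).trans <|
    mul_le_mul_of_nonneg_left (lpNorm_projCube_sub_le u v) hK

lemma lpNorm_comp_projCube_sub_le_add (hp : 1 ≤ p) (hab : a ≤ b) (hK : 0 ≤ K)
    (hg : LpLipschitzOn p K (cube d a b) g)
    (hgf : ∀ y ∈ cube d a b, lpNorm p (g y - f y) ≤ ε)
    (u : Fin d → ℝ) {v : Fin d → ℝ} (hv : v ∈ cube d a b) :
    lpNorm p (g (projCube a b u) - f v) ≤ K * lpNorm p (u - v) + ε := by
  calc lpNorm p (g (projCube a b u) - f v)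
      ≤ lpNorm p (g (projCube a b u) - g (projCube a b v)) + lpNorm p (g v - f v) := by
        rw [projCube_of_mem hv]
        exact lpNorm_sub_le hp _ _ _
    _ ≤ K * lpNorm p (u - v) + ε :=
        add_le_add (lpNorm_comp_projCube_sub_le hab hK hg u v) (hgf v hv)

end projCube

lemma compSeq_mem_cube {dims : ℕ → ℕ} {a b : ℕ → ℝ} {n : ℕ}
    {f : ∀ i : ℕ, (Fin (dims i) → ℝ) → (Fin (dims (i + 1)) → ℝ)}
    (hmap : ∀ i, i + 1 < n → ∀ x ∈ cube (dims i) (a i) (b i),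
      f i x ∈ cube (dims (i + 1)) (a (i + 1)) (b (i + 1)))
    {x : Fin (dims 0) → ℝ} (hx : x ∈ cube (dims 0) (a 0) (b 0)) :
    ∀ k < n, compSeq dims f k x ∈ cube (dims k) (a k) (b k)
  | 0, _ => hx
  | k + 1, hk => hmap k hk _ (compSeq_mem_cube hmap hx k (by omega))

lemma mul_sum_mul_prod_Ico_add (L ε : ℕ → ℝ) (k : ℕ) :
    L k * ∑ i ∈ range k, ε i * ∏ j ∈ Ico (i + 1) k, L j + ε k =
      ∑ i ∈ range (k + 1), ε i * ∏ j ∈ Ico (i + 1) (k + 1), L j := by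
  rw [sum_range_succ, Ico_self, prod_empty, mul_one, mul_sum]
  congr 1
  refine sum_congr rfl fun i hi => ?_
  rw [prod_Ico_succ_top (by simpa using hi)]
  ring

lemma sum_mul_inv_prod_Ico_mul_prod_Ico {n : ℕ} (hn : 0 < n) {L : ℕ → ℝ}
    (hL : ∀ i < n, 0 < L i) (ε : ℝ) :
    ∑ i ∈ range n, ε * (n : ℝ)⁻¹ * (∏ j ∈ Ico (i + 1) n, L j)⁻¹ * ∏ j ∈ Ico (i + 1) n, L j = ε := by
  rw [sum_congr rfl fun i _ =>
    inv_mul_cancel_right₀ (prod_pos fun j hj => hL j (mem_Ico.1 hj).2).ne' _,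
    sum_const, card_range, nsmul_eq_mul]
  field_simp

namespace DNN

def lastLayerParams (Φ : DNN) : ℕ := Φ.ℓ (Φ.L + 1) * (Φ.ℓ Φ.L + 1)

lemma lastLayerParams_le_params (Φ : DNN) : Φ.lastLayerParams ≤ Φ.params :=
  single_le_sum (f := fun k => Φ.ℓ (k + 1) * (Φ.ℓ k + 1)) (fun _ _ => Nat.zero_le _)
    (self_mem_range_succ Φ.L)

lemma params_add_lastLayerParams_le (Φ : DNN) :
    Φ.params + Φ.lastLayerParams ≤ 2 * Φ.params := by
  linarith [Φ.lastLayerParams_le_params]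

lemma affine_apply (Φ : DNN) (k : ℕ) (x : Fin (Φ.ℓ k) → ℝ) (i : Fin (Φ.ℓ (k + 1))) :
    Φ.affine k x i = (∑ j, Φ.W k i j * x j) + Φ.b k i := rfl

lemma hidden_succ_apply (Φ : DNN) (k : ℕ) (x : Fin (Φ.ℓ 0) → ℝ) (i : Fin (Φ.ℓ (k + 1))) :
    Φ.hidden (k + 1) x i = max (Φ.affine k (Φ.hidden k x) i) 0 := rfl

lemma W_congr (Φ : DNN) {k k' : ℕ} (hk : k = k') (i : Fin (Φ.ℓ (k + 1))) (j : Fin (Φ.ℓ k)) :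
    Φ.W k i j = Φ.W k' (Fin.cast (by rw [hk]) i) (Fin.cast (by rw [hk]) j) := by
  subst hk; rfl

lemma b_congr (Φ : DNN) {k k' : ℕ} (hk : k = k') (i : Fin (Φ.ℓ (k + 1))) :
    Φ.b k i = Φ.b k' (Fin.cast (by rw [hk]) i) := by
  subst hk; rfl

section concat

variable (Φ Ψ : DNN)

def concatWidth (k : ℕ) : ℕ := if k ≤ Φ.L then Φ.ℓ k else Ψ.ℓ (k - Φ.L)

variable {Φ Ψ}

lemma concatWidth_of_le {k : ℕ} (hk : k ≤ Φ.L) : concatWidth Φ Ψ k = Φ.ℓ k := if_pos hk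

lemma concatWidth_of_eq_add {k j : ℕ} (hk : k = Φ.L + j) (hj : 0 < j) :
    concatWidth Φ Ψ k = Ψ.ℓ j := by
  rw [concatWidth, if_neg (by omega)]
  congr 1
  omega

variable (Φ Ψ) in
/-- The layers of `Φ` followed by those of `Ψ`, with the last affine layer of `Φ` and the first
affine layer of `Ψ` merged into one. -/
def concat (h : Φ.ℓ (Φ.L + 1) = Ψ.ℓ 0) : DNN where
  L := Φ.L + Ψ.L
  ℓ := concatWidth Φ Ψ
  W k :=
    if hk : k < Φ.L then
      (Φ.W k).submatrix (Fin.cast (concatWidth_of_le hk)) (Fin.cast (concatWidth_of_le hk.le))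
    else if hk' : k = Φ.L then
      (Ψ.W 0 * (Φ.W Φ.L).submatrix (Fin.cast h.symm) id).submatrix
        (Fin.cast (concatWidth_of_eq_add (by omega) one_pos))
        (Fin.cast ((concatWidth_of_le hk'.le).trans (congrArg Φ.ℓ hk')))
    else
      (Ψ.W (k - Φ.L)).submatrix (Fin.cast (concatWidth_of_eq_add (by omega) (by omega)))
        (Fin.cast (concatWidth_of_eq_add (by omega) (by omega)))
  b k :=
    if hk : k < Φ.L then
      Φ.b k ∘ Fin.cast (concatWidth_of_le hk)
    else if hk' : k = Φ.L then
      (Ψ.W 0 *ᵥ (Φ.b Φ.L ∘ Fin.cast h.symm) + Ψ.b 0) ∘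
        Fin.cast (concatWidth_of_eq_add (by omega) one_pos)
    else
      Ψ.b (k - Φ.L) ∘ Fin.cast (concatWidth_of_eq_add (by omega) (by omega))

variable {h : Φ.ℓ (Φ.L + 1) = Ψ.ℓ 0}

lemma concat_affine_of_lt {k : ℕ} (hk : k < Φ.L) (v : Fin ((concat Φ Ψ h).ℓ k) → ℝ)
    (i : Fin ((concat Φ Ψ h).ℓ (k + 1))) :
    (concat Φ Ψ h).affine k v i =
      Φ.affine k (v ∘ Fin.cast (concatWidth_of_le hk.le).symm)
        (Fin.cast (concatWidth_of_le hk) i) := by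
  rw [affine_apply, affine_apply, show (concat Φ Ψ h).W k = _ from dif_pos hk,
    show (concat Φ Ψ h).b k = _ from dif_pos hk]
  congr 1
  exact Fin.sum_congr' (fun j => Φ.W k _ j * v (Fin.cast (concatWidth_of_le hk.le).symm j)) _

lemma concat_affine_self (v : Fin ((concat Φ Ψ h).ℓ Φ.L) → ℝ)
    (i : Fin ((concat Φ Ψ h).ℓ (Φ.L + 1))) :
    (concat Φ Ψ h).affine Φ.L v i =
      Ψ.affine 0 (Φ.affine Φ.L (v ∘ Fin.cast (concatWidth_of_le le_rfl).symm) ∘ Fin.cast h.symm)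
        (Fin.cast (concatWidth_of_eq_add rfl one_pos) i) := by
  set M := (Φ.W Φ.L).submatrix (Fin.cast h.symm) id
  set v' := v ∘ Fin.cast (concatWidth_of_le le_rfl).symm
  have hsum : ∑ j, (concat Φ Ψ h).W Φ.L i j * v j =
      ((Ψ.W 0 * M) *ᵥ v') (Fin.cast (concatWidth_of_eq_add rfl one_pos) i) := by
    rw [show (concat Φ Ψ h).W Φ.L = _ from (dif_neg (lt_irrefl _)).trans (dif_pos rfl)]
    exact Fin.sum_congr' (fun j => (Ψ.W 0 * M) _ j * v' j) _
  have hΦ : Φ.affine Φ.L v' ∘ Fin.cast h.symm = M *ᵥ v' + Φ.b Φ.L ∘ Fin.cast h.symm := rfl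
  rw [affine_apply, hsum,
    show (concat Φ Ψ h).b Φ.L = _ from (dif_neg (lt_irrefl _)).trans (dif_pos rfl)]
  change _ = (Ψ.W 0 *ᵥ (Φ.affine Φ.L v' ∘ Fin.cast h.symm)) _ + _
  rw [hΦ, mulVec_add, mulVec_mulVec, Pi.add_apply, add_assoc]
  rfl

lemma concat_affine_add {j : ℕ} (hj : 0 < j) (v : Fin ((concat Φ Ψ h).ℓ (Φ.L + j)) → ℝ)
    (i : Fin ((concat Φ Ψ h).ℓ (Φ.L + j + 1))) :
    (concat Φ Ψ h).affine (Φ.L + j) v i =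
      Ψ.affine j (v ∘ Fin.cast (concatWidth_of_eq_add rfl hj).symm)
        (Fin.cast (concatWidth_of_eq_add (Nat.add_assoc _ _ _) j.succ_pos) i) := by
  have hk : ¬ Φ.L + j < Φ.L := by omega
  have hk' : Φ.L + j ≠ Φ.L := by omega
  rw [affine_apply, affine_apply,
    show (concat Φ Ψ h).W (Φ.L + j) = _ from (dif_neg hk).trans (dif_neg hk'),
    show (concat Φ Ψ h).b (Φ.L + j) = _ from (dif_neg hk).trans (dif_neg hk')]
  have hjj : Φ.L + j - Φ.L = j := by omega
  congr 1
  · refine Fintype.sum_equiv (finCongr (concatWidth_of_eq_add rfl hj)) _ _ fun j' => ?_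
    exact congrArg (· * v j') (W_congr Ψ hjj _ _)
  · exact b_congr Ψ hjj _

lemma concat_hidden_of_le (x : Fin ((concat Φ Ψ h).ℓ 0) → ℝ) {k : ℕ} (hk : k ≤ Φ.L)
    (i : Fin ((concat Φ Ψ h).ℓ k)) :
    (concat Φ Ψ h).hidden k x i =
      Φ.hidden k (x ∘ Fin.cast (concatWidth_of_le (Ψ := Ψ) Φ.L.zero_le).symm)
        (Fin.cast (concatWidth_of_le hk) i) := by
  induction k with
  | zero => rfl
  | succ k ih =>
    rw [hidden_succ_apply, hidden_succ_apply, concat_affine_of_lt hk]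
    congr 2
    funext j
    exact ih (by omega) _

lemma concat_affine_hidden_add (x : Fin ((concat Φ Ψ h).ℓ 0) → ℝ) (j : ℕ)
    (i : Fin ((concat Φ Ψ h).ℓ (Φ.L + j + 1))) :
    (concat Φ Ψ h).affine (Φ.L + j) ((concat Φ Ψ h).hidden (Φ.L + j) x) i =
      Ψ.affine j (Ψ.hidden j (Φ.realize (x ∘ Fin.cast (concatWidth_of_le (Ψ := Ψ) Φ.L.zero_le).symm)
          ∘ Fin.cast h.symm))
        (Fin.cast (concatWidth_of_eq_add (Nat.add_assoc _ _ _) j.succ_pos) i) := by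
  induction j with
  | zero =>
    refine (concat_affine_self _ _).trans ?_
    congr 3
    funext j
    exact concat_hidden_of_le x le_rfl _
  | succ j ih =>
    rw [concat_affine_add j.succ_pos]
    congr 2
    funext j'
    exact congrArg (max · 0) (ih _)

lemma concat_realize (x : Fin ((concat Φ Ψ h).ℓ 0) → ℝ)
    (i : Fin ((concat Φ Ψ h).ℓ ((concat Φ Ψ h).L + 1))) :
    (concat Φ Ψ h).realize x i =
      Ψ.realize
        (Φ.realize (x ∘ Fin.cast (concatWidth_of_le (Ψ := Ψ) Φ.L.zero_le).symm) ∘ Fin.cast h.symm)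
        (Fin.cast (concatWidth_of_eq_add (Nat.add_assoc _ _ _) Ψ.L.succ_pos) i) :=
  concat_affine_hidden_add x Ψ.L i

lemma Realizes.concat {m d r : ℕ} {g : (Fin m → ℝ) → (Fin d → ℝ)}
    {g' : (Fin d → ℝ) → (Fin r → ℝ)} (hΦ : Φ.Realizes g) (hΨ : Ψ.Realizes g') :
    (concat Φ Ψ h).Realizes (g' ∘ g) := by
  obtain ⟨hm, hd, hΦg⟩ := hΦ
  obtain ⟨hd', hr, hΨg⟩ := hΨ
  refine ⟨(concatWidth_of_le (Ψ := Ψ) Φ.L.zero_le).trans hm,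
    (concatWidth_of_eq_add (Nat.add_assoc _ _ _) Ψ.L.succ_pos).trans hr, fun x i => ?_⟩
  rw [Function.comp_apply, hΨg, concat_realize]
  congr 1
  funext j
  exact hΦg x _

lemma concat_params :
    (concat Φ Ψ h).params + Φ.lastLayerParams + Ψ.ℓ 1 * (Ψ.ℓ 0 + 1) =
      Φ.params + Ψ.params + Ψ.ℓ 1 * (Φ.ℓ Φ.L + 1) := by
  have hlow : ∑ k ∈ range Φ.L, concatWidth Φ Ψ (k + 1) * (concatWidth Φ Ψ k + 1) =
      ∑ k ∈ range Φ.L, Φ.ℓ (k + 1) * (Φ.ℓ k + 1) :=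
    sum_congr rfl fun k hk => by
      rw [concatWidth_of_le (mem_range.1 hk), concatWidth_of_le (mem_range.1 hk).le]
  have hup : ∑ k ∈ range Ψ.L,
      concatWidth Φ Ψ (Φ.L + (k + 1) + 1) * (concatWidth Φ Ψ (Φ.L + (k + 1)) + 1) =
      ∑ k ∈ range Ψ.L, Ψ.ℓ (k + 1 + 1) * (Ψ.ℓ (k + 1) + 1) :=
    sum_congr rfl fun k _ => by
      rw [concatWidth_of_eq_add (j := k + 1 + 1) (by omega) (by omega),
        concatWidth_of_eq_add rfl (by omega)]
  have hmid : concatWidth Φ Ψ (Φ.L + 0 + 1) * (concatWidth Φ Ψ (Φ.L + 0) + 1) =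
      Ψ.ℓ 1 * (Φ.ℓ Φ.L + 1) := by
    rw [concatWidth_of_eq_add (j := 1) rfl one_pos, concatWidth_of_le (k := Φ.L + 0) le_rfl]
    rfl
  simp only [params, lastLayerParams, concat]
  rw [show Φ.L + Ψ.L + 1 = Φ.L + (Ψ.L + 1) by ring, sum_range_add, sum_range_succ', hlow, hup,
    hmid, sum_range_succ, sum_range_succ' (fun k => Ψ.ℓ (k + 1) * (Ψ.ℓ k + 1))]
  ring

lemma lastLayerParams_concat (h' : Ψ.L = 0 → Φ.ℓ Φ.L = Ψ.ℓ 0) :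
    (concat Φ Ψ h).lastLayerParams = Ψ.lastLayerParams := by
  have hL : concatWidth Φ Ψ (Φ.L + Ψ.L) = Ψ.ℓ Ψ.L := by
    rcases Nat.eq_zero_or_pos Ψ.L with h0 | hpos
    · rw [h0, Nat.add_zero, concatWidth_of_le le_rfl, h' h0]
    · exact concatWidth_of_eq_add rfl hpos
  simp only [lastLayerParams, concat]
  rw [hL, concatWidth_of_eq_add (Nat.add_assoc _ _ _) Ψ.L.succ_pos]

end concat

/-- Realizes `projCube a b` exactly, since
`min (max y a) b = relu (relu (y - a) - relu (y - b)) + a` for `a ≤ b`. -/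
def projCubeNet (d : ℕ) (a b : ℝ) : DNN where
  L := 2
  ℓ k := if k = 1 then d + d else d
  W
    | 0 => Fin.append (fun j => Pi.single j 1) (fun j => Pi.single j 1)
    | 1 => Matrix.of fun i => Fin.append (Pi.single i 1) (Pi.single i (-1))
    | 2 => (1 : Matrix (Fin d) (Fin d) ℝ)
    | _ => 0
  b
    | 0 => Fin.append (fun _ => -a) (fun _ => -b)
    | 1 => 0
    | _ => fun _ => a

lemma projCubeNet_params (d : ℕ) (a b : ℝ) :
    (projCubeNet d a b).params = (d + d) * (d + 1) + d * (d + d + 1) + d * (d + 1) := by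
  simp [params, projCubeNet, sum_range_succ]

lemma projCubeNet_realizes (d : ℕ) {a b : ℝ} (hab : a ≤ b) :
    (projCubeNet d a b).Realizes (projCube a b (d := d)) := by
  refine ⟨rfl, rfl, fun x i => ?_⟩
  change projCube a b x i = ∑ k, (1 : Matrix (Fin d) (Fin d) ℝ) i k *
    max (∑ k', Fin.append (Pi.single k (1 : ℝ)) (Pi.single k (-1)) k' *
      max (∑ l, Fin.append (fun j => Pi.single j (1 : ℝ)) (fun j => Pi.single j 1) k' l * x l +
        Fin.append (fun _ => -a) (fun _ => -b) k') 0 + 0) 0 + a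
  simp only [Fin.sum_univ_add, Fin.append_left, Fin.append_right]
  simp only [projCube, Matrix.one_apply, Pi.single_apply, ite_mul, one_mul, zero_mul, sum_ite_eq',
    mem_univ, ↓reduceIte, neg_mul, add_zero, sum_ite_eq, max_def, min_def]
  split_ifs <;> linarith

lemma exists_realizes_comp_projCube {m d r : ℕ} {G : (Fin m → ℝ) → (Fin d → ℝ)}
    {g : (Fin d → ℝ) → (Fin r → ℝ)} {Ψ Φ : DNN} (hΨ : Ψ.Realizes G) (hΦ : Φ.Realizes g)
    {a b : ℝ} (hab : a ≤ b) :
    ∃ Θ : DNN, Θ.Realizes (g ∘ projCube a b ∘ G) ∧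
      Θ.params + Θ.lastLayerParams =
        Ψ.params + Ψ.lastLayerParams + d * (2 * d + 1) + Φ.params + Φ.lastLayerParams := by
  have hΦin : Φ.ℓ 0 = d := hΦ.fst
  have hΨout : Ψ.ℓ (Ψ.L + 1) = d := hΨ.snd.fst
  set C := projCubeNet d a b
  have hC : C.params = (d + d) * (d + 1) + d * (d + d + 1) + d * (d + 1) :=
    projCubeNet_params d a b
  have hCL : C.ℓ C.L = d := rfl
  have hClast : C.lastLayerParams = d * (d + 1) := rfl
  have hCΦ : C.ℓ (C.L + 1) = Φ.ℓ 0 := hΦin.symm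
  have hΨY : Ψ.ℓ (Ψ.L + 1) = (concat C Φ hCΦ).ℓ 0 := hΨout
  refine ⟨concat Ψ (concat C Φ hCΦ) hΨY, hΨ.concat ((projCubeNet_realizes d hab).concat hΦ), ?_⟩
  have hY := concat_params (h := hCΦ)
  have hΘ := concat_params (h := hΨY)
  have hY0 : (concat C Φ hCΦ).ℓ 0 = d := hΨY.symm.trans hΨout
  have hY1 : (concat C Φ hCΦ).ℓ 1 = d + d :=
    concatWidth_of_le (Φ := C) (Ψ := Φ) (k := 1) (show 1 ≤ 2 by norm_num)
  rw [lastLayerParams_concat (fun h0 => by simp [C, concat, projCubeNet] at h0),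
    lastLayerParams_concat (fun _ => hΦin.symm)]
  rw [hC, hCL, hClast, hΦin] at hY
  rw [hY0, hY1] at hΘ
  simp only [lastLayerParams, hΨout] at hΘ ⊢
  linarith

end DNN

lemma sInf_mem_of_subset_range_natCast {S : Set ℝ≥0∞} (htop : sInf S ≠ ⊤)
    (hS : S ⊆ Set.range Nat.cast) : sInf S ∈ S := by
  have hT : (Nat.cast ⁻¹' S : Set ℕ).Nonempty := by
    obtain ⟨_, hs⟩ :=
      Set.nonempty_iff_ne_empty.2 fun (he : S = ∅) => htop (by rw [he, sInf_empty])
    obtain ⟨k, rfl⟩ := hS hs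
    exact ⟨k, hs⟩
  have hmin : sInf S = (sInf (Nat.cast ⁻¹' S : Set ℕ) : ℕ) :=
    le_antisymm (sInf_le (Nat.sInf_mem hT)) <| le_sInf fun s hs => by
      obtain ⟨k, rfl⟩ := hS hs
      exact_mod_cast Nat.sInf_le hs
  exact hmin ▸ Nat.sInf_mem hT

section Cost

variable {p : ℝ≥0∞} {m n : ℕ} {D : Set (Fin m → ℝ)} {f g : (Fin m → ℝ) → (Fin n → ℝ)}
  {L ε : ℝ}

lemma Cost_le_params {Φ : DNN} (hΦ : Φ.Realizes g)
    (hgf : ∀ x ∈ D, lpNorm p (g x - f x) ≤ ε)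
    (hg : LpLipschitzOn p L D g) : Cost p D f L ε ≤ Φ.params :=
  sInf_le ⟨Φ, g, hΦ, rfl, hgf, hg⟩

lemma exists_params_eq_Cost (h : Cost p D f L ε ≠ ⊤) :
    ∃ (Φ : DNN) (g : (Fin m → ℝ) → (Fin n → ℝ)), Φ.Realizes g ∧
      (∀ x ∈ D, lpNorm p (g x - f x) ≤ ε) ∧
      LpLipschitzOn p L D g ∧ (Φ.params : ℝ≥0∞) = Cost p D f L ε := by
  unfold Cost at h ⊢
  obtain ⟨Φ, g, hΦ, hparams, hgf, hg⟩ :=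
    sInf_mem_of_subset_range_natCast h (by rintro _ ⟨Φ, g, -, rfl, -⟩; exact ⟨_, rfl⟩)
  exact ⟨Φ, g, hΦ, hgf, hg, hparams.symm⟩

end Cost

theorem exists_realizes_approx_compSeq {p : ℝ≥0∞} (hp : 1 ≤ p) {n : ℕ} {dims : ℕ → ℕ}
    {L ε a b : ℕ → ℝ} {P : ℕ → ℝ≥0∞}
    {f : ∀ i : ℕ, (Fin (dims i) → ℝ) → (Fin (dims (i + 1)) → ℝ)}
    (hL : ∀ i < n, 0 ≤ L i) (hab : ∀ i < n, a i ≤ b i)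
    (hmap : ∀ i, i + 1 < n → ∀ x ∈ cube (dims i) (a i) (b i),
      f i x ∈ cube (dims (i + 1)) (a (i + 1)) (b (i + 1)))
    (hf : ∀ i < n, ∃ (Φ : DNN) (g : (Fin (dims i) → ℝ) → (Fin (dims (i + 1)) → ℝ)),
      Φ.Realizes g ∧ (∀ x ∈ cube (dims i) (a i) (b i), lpNorm p (g x - f i x) ≤ ε i) ∧
      LpLipschitzOn p (L i) (cube (dims i) (a i) (b i)) g ∧ (Φ.params : ℝ≥0∞) ≤ P i)
    {k : ℕ} (hk : 0 < k) (hkn : k ≤ n) :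
    ∃ (Θ : DNN) (G : (Fin (dims 0) → ℝ) → (Fin (dims k) → ℝ)), Θ.Realizes G ∧
      ((Θ.params + Θ.lastLayerParams : ℕ) : ℝ≥0∞) ≤
        2 * ∑ i ∈ range k, P i + ∑ i ∈ Ico 1 k, ((dims i * (2 * dims i + 1) : ℕ) : ℝ≥0∞) ∧
      (∀ x ∈ cube (dims 0) (a 0) (b 0),
        lpNorm p (G x - compSeq dims f k x) ≤ ∑ i ∈ range k, ε i * ∏ j ∈ Ico (i + 1) k, L j) ∧
      LpLipschitzOn p (∏ i ∈ range k, L i) (cube (dims 0) (a 0) (b 0)) G := by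
  induction k with
  | zero => omega
  | succ k ih =>
    obtain ⟨Φ, g, hΦ, hgf, hg, hP⟩ := hf k hkn
    have hΦP : ((Φ.params + Φ.lastLayerParams : ℕ) : ℝ≥0∞) ≤ 2 * P k :=
      (Nat.cast_le.2 Φ.params_add_lastLayerParams_le).trans (by push_cast; gcongr)
    rcases Nat.eq_zero_or_pos k with rfl | hk
    · refine ⟨Φ, g, hΦ, by simpa using hΦP, fun x hx => by simpa [compSeq] using hgf x hx,
        by simpa using hg⟩
    obtain ⟨Θ, G, hΘ, hΘP, hGF, hG⟩ := ih hk (by omega)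
    obtain ⟨Θ', hΘ', hparams⟩ := DNN.exists_realizes_comp_projCube hΘ hΦ (hab k hkn)
    refine ⟨Θ', _, hΘ', ?_, fun x hx => ?_, fun x hx y hy => ?_⟩
    · rw [hparams, sum_range_succ, sum_Ico_succ_top hk]
      calc ((Θ.params + Θ.lastLayerParams + dims k * (2 * dims k + 1) + Φ.params +
            Φ.lastLayerParams : ℕ) : ℝ≥0∞)
          = ((Θ.params + Θ.lastLayerParams : ℕ) : ℝ≥0∞) +
              ((Φ.params + Φ.lastLayerParams : ℕ) : ℝ≥0∞) +
              ((dims k * (2 * dims k + 1) : ℕ) : ℝ≥0∞) := by push_cast; ring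
        _ ≤ (2 * ∑ i ∈ range k, P i + ∑ i ∈ Ico 1 k, ((dims i * (2 * dims i + 1) : ℕ) : ℝ≥0∞)) +
              2 * P k + ((dims k * (2 * dims k + 1) : ℕ) : ℝ≥0∞) := by gcongr
        _ = _ := by ring
    · calc _ ≤ L k * lpNorm p (G x - compSeq dims f k x) + ε k :=
            lpNorm_comp_projCube_sub_le_add hp (hab k hkn) (hL k hkn) hg hgf _
              (compSeq_mem_cube hmap hx k hkn)
        _ ≤ L k * ∑ i ∈ range k, ε i * ∏ j ∈ Ico (i + 1) k, L j + ε k := by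
            gcongr
            exacts [hL k hkn, hGF x hx]
        _ = _ := mul_sum_mul_prod_Ico_add L ε k
    · calc _ ≤ L k * lpNorm p (G x - G y) :=
            lpNorm_comp_projCube_sub_le (hab k hkn) (hL k hkn) hg _ _
        _ ≤ L k * ((∏ i ∈ range k, L i) * lpNorm p (x - y)) := by
            gcongr
            exacts [hL k hkn, hG x hx y hy]
        _ = _ := by rw [prod_range_succ]; ring

/-- The paper's `f_1, …, f_n` and `d_1, …, d_{n+1}` are `f 0, …, f (n-1)` and
`dims 0, …, dims n`. -/
theorem cost_of_composition_general
    (p : ℝ≥0∞) (hp : 1 ≤ p) (n : ℕ) (hn : 0 < n)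
    (dims : ℕ → ℕ)
    (L : ℕ → ℝ) (hL : ∀ i < n, 0 < L i)
    (a b : ℕ → ℝ) (hab : ∀ i < n, a i < b i)
    (f : ∀ i : ℕ, (Fin (dims i) → ℝ) → (Fin (dims (i + 1)) → ℝ))
    (hmap : ∀ i, i + 1 < n → ∀ x ∈ cube (dims i) (a i) (b i),
      f i x ∈ cube (dims (i + 1)) (a (i + 1)) (b (i + 1)))
    (ε : ℝ) :
    Cost p (cube (dims 0) (a 0) (b 0)) (compSeq dims f n)
        (∏ i ∈ Finset.range n, L i) ε ≤
      6 * ((∑ i ∈ Finset.Ico 1 n, dims i * (dims i + 1) : ℕ) : ℝ≥0∞) +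
      3 * ∑ i ∈ Finset.range n,
        Cost p (cube (dims i) (a i) (b i)) (f i) (L i)
          (ε * (n : ℝ)⁻¹ * (∏ j ∈ Finset.Ico (i + 1) n, L j)⁻¹) := by
  by_cases htop : ∃ i ∈ range n, Cost p (cube (dims i) (a i) (b i)) (f i) (L i)
      (ε * (n : ℝ)⁻¹ * (∏ j ∈ Ico (i + 1) n, L j)⁻¹) = ⊤
  · obtain ⟨i, hi, h⟩ := htop
    rw [ENNReal.sum_eq_top.2 ⟨i, hi, h⟩, ENNReal.mul_top three_ne_zero, add_top]
    exact le_top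
  push Not at htop
  obtain ⟨Θ, G, hΘ, hparams, hGF, hG⟩ := exists_realizes_approx_compSeq hp
    (fun i hi => (hL i hi).le) (fun i hi => (hab i hi).le) hmap
    (fun i hi => (exists_params_eq_Cost (htop i (mem_range.2 hi))).imp
      fun _ ⟨g, hΦ, hgf, hg, hP⟩ => ⟨g, hΦ, hgf, hg, hP.le⟩) hn le_rfl
  calc Cost p (cube (dims 0) (a 0) (b 0)) (compSeq dims f n) (∏ i ∈ range n, L i) ε
      ≤ Θ.params :=
        Cost_le_params hΘ (fun x hx => sum_mul_inv_prod_Ico_mul_prod_Ico hn hL ε ▸ hGF x hx) hG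
    _ ≤ ((Θ.params + Θ.lastLayerParams : ℕ) : ℝ≥0∞) := by gcongr; exact Nat.le_add_right _ _
    _ ≤ _ := hparams
    _ ≤ _ := by
      rw [add_comm]
      gcongr
      · have h6 : ∑ i ∈ Ico 1 n, dims i * (2 * dims i + 1) ≤
            6 * ∑ i ∈ Ico 1 n, dims i * (dims i + 1) := by
          rw [mul_sum]
          exact sum_le_sum fun i _ => by nlinarith
        exact_mod_cast h6
      · norm_num

/-- **Proposition 2.6** (cost of compositions): the approximation cost of
`f_n ∘ ⋯ ∘ f_1` with Lipschitz constant `∏ L_i` is bounded by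
`6 ∑_{i=2}^n d_i(d_i+1) + 3 ∑_{i=1}^n Cost_p(f_i, L_i, ε n⁻¹ (∏_{j=i+1}^n L_j)⁻¹)`.
(Here the paper's `f_1, …, f_n` are `f 0, …, f (n-1)` and `d_1, …, d_{n+1}` are
`dims 0, …, dims n`.) -/
theorem cost_of_composition
    (p : ℝ≥0∞) (hp : 1 ≤ p) (n : ℕ) (hn : 0 < n)
    (dims : ℕ → ℕ) (hdims : ∀ i ≤ n, 0 < dims i)
    (L : ℕ → ℝ) (hL : ∀ i < n, 0 < L i)
    (a b : ℕ → ℝ) (hab : ∀ i < n, a i < b i)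
    (f : ∀ i : ℕ, (Fin (dims i) → ℝ) → (Fin (dims (i + 1)) → ℝ))
    (hcont : ∀ i < n, ContinuousOn (f i) (cube (dims i) (a i) (b i)))
    (hmap : ∀ i, i + 1 < n → ∀ x ∈ cube (dims i) (a i) (b i),
      f i x ∈ cube (dims (i + 1)) (a (i + 1)) (b (i + 1)))
    (ε : ℝ) (hε : 0 ≤ ε) :
    Cost p (cube (dims 0) (a 0) (b 0)) (compSeq dims f n)
        (∏ i ∈ Finset.range n, L i) ε ≤
      6 * ((∑ i ∈ Finset.Ico 1 n, dims i * (dims i + 1) : ℕ) : ℝ≥0∞) +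
      3 * ∑ i ∈ Finset.range n,
        Cost p (cube (dims i) (a i) (b i)) (f i) (L i)
          (ε * (n : ℝ)⁻¹ * (∏ j ∈ Finset.Ico (i + 1) n, L j)⁻¹) :=
  cost_of_composition_general p hp n hn dims L hL a b hab f hmap ε
end
end

section
/- Corollary 3.7 (parallelized products on [−1,1]^d): There exists a constant K ∈ ℕ which satisfies for all d ∈ ℕ, ε ∈ (0,1], p ∈ [1,∞], and all f ∈ P([−1,1]^d) that Cost_p(f, √32·d³, ε) ≤ K·d^K·ε^{−1}. -/
open scoped BigOperators ENNReal

noncomputable section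

/-!
Multiplication is approximated through the polarization identity `xy = ((x+y)² - (x-y)²)/4`,
with `t²` replaced by its piecewise linear interpolant on the grid of mesh `1/N` in `[-4, 4]`.
The interpolant is one layer of hinge functions; its error lies in `[0, 2/N]` and is itself
`1/N`-Lipschitz. A block product is computed by a scan that multiplies the coordinates in one at a
time and restarts at the first coordinate of every block. All intermediate values stay in
`[-2, 2]`, so each step adds at most `1/(2N)` to the error and multiplies differences by at most
`1 + 1/(2N)`; this gives a coordinatewise error `d/(2N)` and Lipschitz constant `4d`. The scan is
realized by a ReLU network of depth `2d` alternating layers of width `d`, which carry the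
coordinates, with hinge layers of width `d + 16N`, so it has `O(d²N)` parameters, and
`N ≈ d²/ε` gives the claim.
-/

open Finset

namespace DNN

def ofFun (L : ℕ) (ℓ : ℕ → ℕ) (W : ℕ → ℕ → ℕ → ℝ) (b : ℕ → ℕ → ℝ) : DNN where
  L := L
  ℓ := ℓ
  W k := Matrix.of fun i j => W k i j
  b k i := b k i

section OfFun

variable {L : ℕ} {ℓ : ℕ → ℕ} {W : ℕ → ℕ → ℕ → ℝ} {b : ℕ → ℕ → ℝ} {V : ℕ → ℕ → ℝ}
  {x : Fin (ℓ 0) → ℝ}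

lemma affine_ofFun {k : ℕ} {y : Fin (ℓ k) → ℝ} (hy : ∀ j : Fin (ℓ k), y j = V k j)
    (i : Fin (ℓ (k + 1))) :
    (ofFun L ℓ W b).affine k y i = ∑ j ∈ range (ℓ k), W k i j * V k j + b k i := by
  simp only [affine, ofFun, Matrix.of_apply, hy]
  exact congrArg (· + b k i) (Fin.sum_univ_eq_sum_range (fun j => W k i j * V k j) _)

lemma hidden_ofFun (h0 : ∀ j : Fin (ℓ 0), x j = V 0 j)
    (hsucc : ∀ k < L, ∀ i < ℓ (k + 1),
      V (k + 1) i = max (∑ j ∈ range (ℓ k), W k i j * V k j + b k i) 0) :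
    ∀ k ≤ L, ∀ i : Fin (ℓ k), (ofFun L ℓ W b).hidden k x i = V k i := by
  intro k
  induction k with
  | zero => intro _ i; exact h0 i
  | succ k ih =>
    intro hk i
    show max ((ofFun L ℓ W b).affine k _ i) 0 = _
    rw [affine_ofFun (ih (by omega)), hsucc k (by omega) i i.2]

lemma realize_ofFun (h0 : ∀ j : Fin (ℓ 0), x j = V 0 j)
    (hsucc : ∀ k < L, ∀ i < ℓ (k + 1),
      V (k + 1) i = max (∑ j ∈ range (ℓ k), W k i j * V k j + b k i) 0)
    (i : Fin (ℓ (L + 1))) :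
    (ofFun L ℓ W b).realize x i = ∑ j ∈ range (ℓ L), W L i j * V L j + b L i :=
  affine_ofFun (hidden_ofFun h0 hsucc L le_rfl) i

end OfFun

lemma params_le {Φ : DNN} {B : ℕ} (h : ∀ k ≤ Φ.L, Φ.ℓ (k + 1) * (Φ.ℓ k + 1) ≤ B) :
    Φ.params ≤ (Φ.L + 1) * B := by
  simpa [params] using sum_le_card_nsmul (range (Φ.L + 1)) _ B
    fun k hk => h k (Nat.lt_succ_iff.1 (mem_range.1 hk))

def toFun (Φ : DNN) {m n : ℕ} (hm : Φ.ℓ 0 = m) (hn : Φ.ℓ (Φ.L + 1) = n)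
    (x : Fin m → ℝ) (i : Fin n) : ℝ :=
  Φ.realize (fun j => x (Fin.cast hm j)) (Fin.cast hn.symm i)

lemma realizes_toFun (Φ : DNN) {m n : ℕ} (hm : Φ.ℓ 0 = m) (hn : Φ.ℓ (Φ.L + 1) = n) :
    Φ.Realizes (Φ.toFun hm hn) :=
  ⟨hm, hn, fun _ _ => rfl⟩

end DNN

lemma cost_le_params {p : ℝ≥0∞} {m n : ℕ} {D : Set (Fin m → ℝ)}
    {f g : (Fin m → ℝ) → Fin n → ℝ} {L ε : ℝ} {Φ : DNN} (hΦ : Φ.Realizes g)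
    (herr : ∀ x ∈ D, lpNorm p (g x - f x) ≤ ε)
    (hlip : ∀ x ∈ D, ∀ y ∈ D, lpNorm p (g x - g y) ≤ L * lpNorm p (x - y)) :
    Cost p D f L ε ≤ Φ.params :=
  sInf_le ⟨Φ, g, hΦ, rfl, herr, hlip⟩

section LpNorm

variable {p : ℝ≥0∞} {k : ℕ}

lemma lpNorm_eq_norm_toLp (hp : 1 ≤ p) (x : Fin k → ℝ) :
    lpNorm p x = ‖WithLp.toLp p x‖ := by
  unfold lpNorm
  split_ifs with h
  · subst h; simp [PiLp.norm_eq_ciSup, Real.norm_eq_abs]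
  · simp [PiLp.norm_eq_sum (ENNReal.toReal_pos (by positivity) h), Real.norm_eq_abs]

lemma abs_le_lpNorm (hp : 1 ≤ p) (x : Fin k → ℝ) (i : Fin k) : |x i| ≤ lpNorm p x := by
  have : Fact (1 ≤ p) := ⟨hp⟩
  rw [lpNorm_eq_norm_toLp hp, ← Real.norm_eq_abs]
  exact PiLp.norm_apply_le (WithLp.toLp p x) i

lemma lpNorm_le_sum_abs (hp : 1 ≤ p) (x : Fin k → ℝ) : lpNorm p x ≤ ∑ i, |x i| := by
  have : Fact (1 ≤ p) := ⟨hp⟩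
  rw [lpNorm_eq_norm_toLp hp]
  calc ‖WithLp.toLp p x‖ = ‖∑ i, (PiLp.single p i (x i) : PiLp p fun _ : Fin k => ℝ)‖ := by
        simp_rw [← PiLp.toLp_single, ← WithLp.toLp_sum, Finset.univ_sum_single]
    _ ≤ ∑ i, ‖(PiLp.single p i (x i) : PiLp p fun _ : Fin k => ℝ)‖ := norm_sum_le _ _
    _ = ∑ i, |x i| := by simp only [PiLp.norm_single, Real.norm_eq_abs]

lemma lpNorm_le_mul (hp : 1 ≤ p) {x : Fin k → ℝ} {c : ℝ} (h : ∀ i, |x i| ≤ c) :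
    lpNorm p x ≤ k * c :=
  (lpNorm_le_sum_abs hp x).trans <| by
    simpa using Finset.sum_le_sum fun i (_ : i ∈ univ) => h i

lemma lpNorm_nonneg (hp : 1 ≤ p) (x : Fin k → ℝ) : 0 ≤ lpNorm p x := by
  have : Fact (1 ≤ p) := ⟨hp⟩
  rw [lpNorm_eq_norm_toLp hp]
  exact norm_nonneg _

end LpNorm

section SqInterp

variable (a h : ℝ)

-- The chords of `t²` on the grid `a + i h` have slopes `2a + (2i + 1)h`: the first hinge carries
-- the slope `2a + h`, every later one the increment `2h`.
def sqInterpCoeff (i : ℕ) : ℝ := if i = 0 then 2 * a + h else 2 * h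

def sqInterp (n : ℕ) (u : ℝ) : ℝ :=
  a ^ 2 + ∑ i ∈ range n, sqInterpCoeff a h i * max (u - (a + i * h)) 0

-- `u - (a + i h)` clamped to `[0, h]`
def rampPiece (i : ℕ) (u : ℝ) : ℝ := min u (a + ↑(i + 1) * h) - min u (a + i * h)

def sqInterpErr (n : ℕ) (u : ℝ) : ℝ :=
  ∑ i ∈ range n, rampPiece a h i u * (h - rampPiece a h i u)

variable {a h}

lemma sum_range_sqInterpCoeff (n : ℕ) :
    ∑ i ∈ range (n + 1), sqInterpCoeff a h i = 2 * (a + n * h) + h := by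
  induction n with
  | zero => simp [sqInterpCoeff]
  | succ n ih =>
    rw [sum_range_succ, ih, sqInterpCoeff, if_neg n.succ_ne_zero]
    push_cast; ring

lemma sum_range_rampPiece (n : ℕ) (u : ℝ) :
    ∑ i ∈ range n, rampPiece a h i u = min u (a + n * h) - min u a := by
  simpa [rampPiece] using sum_range_sub (fun i : ℕ => min u (a + i * h)) n

lemma sqInterpErr_le (n : ℕ) (u : ℝ) : sqInterpErr a h n u ≤ n * (h ^ 2 / 4) := by
  have hterm : ∀ i ∈ range n, rampPiece a h i u * (h - rampPiece a h i u) ≤ h ^ 2 / 4 :=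
    fun i _ => by nlinarith [sq_nonneg (rampPiece a h i u - h / 2)]
  simpa [sqInterpErr] using sum_le_sum hterm

variable (hh : 0 ≤ h)
include hh

lemma rampPiece_nonneg (i : ℕ) (u : ℝ) : 0 ≤ rampPiece a h i u := by
  have : a + i * h ≤ a + ↑(i + 1) * h := by push_cast; nlinarith
  unfold rampPiece; linarith [min_le_min_left u this]

lemma rampPiece_le (i : ℕ) (u : ℝ) : rampPiece a h i u ≤ h := by
  unfold rampPiece; push_cast
  rcases le_total u (a + i * h) with hu | hu
  · rw [min_eq_left hu, min_eq_left (by nlinarith)]; linarith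
  · rw [min_eq_right hu]; linarith [min_le_right u (a + (i + 1) * h)]

lemma rampPiece_mono (i : ℕ) {u v : ℝ} (huv : u ≤ v) : rampPiece a h i u ≤ rampPiece a h i v := by
  unfold rampPiece; push_cast
  simp only [min_def]; split_ifs <;> nlinarith

lemma sqInterp_eq (n : ℕ) {u : ℝ} (hu : a ≤ u) :
    sqInterp a h n u = min u (a + n * h) ^ 2 + sqInterpErr a h n u
      + (∑ i ∈ range n, sqInterpCoeff a h i) * (u - min u (a + n * h)) := by
  induction n with
  | zero => simp [sqInterp, sqInterpErr, min_eq_right hu]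
  | succ n ih =>
    set m := min u (a + n * h)
    set m' := min u (a + ↑(n + 1) * h)
    set p := rampPiece a h n u
    have hp : p = m' - m := rfl
    have hrelu : max (u - (a + n * h)) 0 = u - m := by
      rcases le_total u (a + n * h) with h' | h' <;> simp [m, h']
    -- the new piece only moves once `u` has passed the knot `a + n h`
    have hkink : p * (a + n * h - m) = 0 := by
      rcases le_total u (a + n * h) with h' | h'
      · have hm' : m' = u := min_eq_left (by push_cast; nlinarith)
        rw [hp, hm', show m = u from min_eq_left h', sub_self, zero_mul]
      · rw [show m = a + n * h from min_eq_right h', sub_self, mul_zero]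
    have hslope := sum_range_sqInterpCoeff (a := a) (h := h) n
    rw [sum_range_succ] at hslope
    simp only [sqInterp, sqInterpErr, sum_range_succ] at ih ⊢
    rw [hrelu]
    linear_combination ih + (m' - m) * hslope + 2 * hkink
      - (2 * (a + n * h) + h - m - m' - p) * hp

lemma sqInterp_eq_sq_add_err (n : ℕ) {u : ℝ} (hau : a ≤ u) (hu : u ≤ a + n * h) :
    sqInterp a h n u = u ^ 2 + sqInterpErr a h n u := by
  rw [sqInterp_eq hh n hau, min_eq_left hu]; ring

lemma sqInterpErr_nonneg (n : ℕ) (u : ℝ) : 0 ≤ sqInterpErr a h n u :=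
  sum_nonneg fun i _ =>
    mul_nonneg (rampPiece_nonneg hh i u) (sub_nonneg.2 (rampPiece_le hh i u))

lemma abs_sqInterpErr_sub_le (n : ℕ) {u v : ℝ} (hu : u ∈ Set.Icc a (a + n * h))
    (hv : v ∈ Set.Icc a (a + n * h)) :
    |sqInterpErr a h n u - sqInterpErr a h n v| ≤ h * |u - v| := by
  -- all pieces move in the same direction, so their total variation is `|u - v|`
  have htotal : ∑ i ∈ range n, |rampPiece a h i u - rampPiece a h i v| = |u - v| := by
    have hsum : ∀ w ∈ Set.Icc a (a + n * h), ∑ i ∈ range n, rampPiece a h i w = w - a :=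
      fun w hw => by rw [sum_range_rampPiece, min_eq_left hw.2, min_eq_right hw.1]
    rcases le_total u v with huv | huv
    · simp_rw [abs_of_nonpos (sub_nonpos.2 (rampPiece_mono hh _ huv)), abs_of_nonpos
        (sub_nonpos.2 huv), neg_sub, sum_sub_distrib, hsum u hu, hsum v hv]
      ring
    · simp_rw [abs_of_nonneg (sub_nonneg.2 (rampPiece_mono hh _ huv)), abs_of_nonneg
        (sub_nonneg.2 huv), sum_sub_distrib, hsum u hu, hsum v hv]
      ring
  rw [sqInterpErr, sqInterpErr, ← sum_sub_distrib, ← htotal, mul_sum]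
  refine (abs_sum_le_sum_abs _ _).trans (sum_le_sum fun i _ => ?_)
  have hu0 := rampPiece_nonneg (a := a) hh i u
  have hv0 := rampPiece_nonneg (a := a) hh i v
  have hu1 := rampPiece_le (a := a) hh i u
  have hv1 := rampPiece_le (a := a) hh i v
  rw [show rampPiece a h i u * (h - rampPiece a h i u) - rampPiece a h i v * (h - rampPiece a h i v)
      = (h - rampPiece a h i u - rampPiece a h i v) * (rampPiece a h i u - rampPiece a h i v)
      by ring, abs_mul]
  exact mul_le_mul_of_nonneg_right (abs_le.2 ⟨by linarith, by linarith⟩) (abs_nonneg _)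

end SqInterp

section ApproxMul

def approxMul (N : ℕ) (x y : ℝ) : ℝ :=
  (sqInterp (-4) (1 / N) (8 * N) (x + y) - sqInterp (-4) (1 / N) (8 * N) (x - y)) / 4

variable {N : ℕ} (hN : 0 < N)
include hN

lemma mem_Icc_of_abs_le_four {u : ℝ} (hu : |u| ≤ 4) :
    u ∈ Set.Icc (-4) (-4 + ((8 * N : ℕ) : ℝ) * (1 / N)) := by
  have : ((8 * N : ℕ) : ℝ) * (1 / N) = 8 := by field_simp; push_cast; ring
  rw [this]; constructor <;> linarith [abs_le.1 hu]

lemma approxMul_eq {x y : ℝ} (hxy : |x| + |y| ≤ 4) :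
    approxMul N x y = x * y + (sqInterpErr (-4) (1 / N) (8 * N) (x + y)
      - sqInterpErr (-4) (1 / N) (8 * N) (x - y)) / 4 := by
  have hh : (0 : ℝ) ≤ 1 / N := by positivity
  have hadd := mem_Icc_of_abs_le_four hN ((abs_add_le x y).trans hxy)
  have hsub := mem_Icc_of_abs_le_four hN ((abs_sub x y).trans hxy)
  rw [approxMul, sqInterp_eq_sq_add_err hh _ hadd.1 hadd.2,
    sqInterp_eq_sq_add_err hh _ hsub.1 hsub.2]
  ring

lemma abs_approxMul_sub_mul_le {x y : ℝ} (hxy : |x| + |y| ≤ 4) :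
    |approxMul N x y - x * y| ≤ 1 / (2 * N) := by
  have hh : (0 : ℝ) ≤ 1 / N := by positivity
  have hmax : ((8 * N : ℕ) : ℝ) * ((1 / N) ^ 2 / 4) = 2 / N := by
    field_simp; push_cast; ring
  have eadd := sqInterpErr_le (a := -4) (h := 1 / N) (8 * N) (x + y)
  have esub := sqInterpErr_le (a := -4) (h := 1 / N) (8 * N) (x - y)
  have nadd := sqInterpErr_nonneg (a := -4) hh (8 * N) (x + y)
  have nsub := sqInterpErr_nonneg (a := -4) hh (8 * N) (x - y)
  rw [approxMul_eq hN hxy, add_sub_cancel_left, abs_le]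
  have : 1 / (2 * (N : ℝ)) = 2 / N / 4 := by field_simp; ring
  constructor <;> linarith

lemma abs_approxMul_sub_mul_le_of_abs_le (x y : ℝ) (hx : |x| ≤ 2) (hy : |y| ≤ 1) :
    |approxMul N x y - x * y| ≤ 1 / (2 * N) :=
  abs_approxMul_sub_mul_le hN (by linarith)

lemma abs_approxMul_sub_le {x x' y y' : ℝ} (hx : |x| ≤ 2) (hx' : |x'| ≤ 2)
    (hy : |y| ≤ 1) (hy' : |y'| ≤ 1) :
    |approxMul N x y - approxMul N x' y'|
      ≤ (1 + 1 / (2 * N)) * |x - x'| + (2 + 1 / (2 * N)) * |y - y'| := by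
  have hh : (0 : ℝ) ≤ 1 / N := by positivity
  have hErr : ∀ {u v : ℝ}, |u| ≤ 4 → |v| ≤ 4 →
      |sqInterpErr (-4) (1 / N) (8 * N) u - sqInterpErr (-4) (1 / N) (8 * N) v|
        ≤ 1 / N * |u - v| := fun hu hv =>
    abs_sqInterpErr_sub_le hh _ (mem_Icc_of_abs_le_four hN hu) (mem_Icc_of_abs_le_four hN hv)
  have hsum : |(x + y) - (x' + y')| ≤ |x - x'| + |y - y'| := by
    rw [show (x + y) - (x' + y') = (x - x') + (y - y') by ring]; exact abs_add_le _ _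
  have hdiff : |(x - y) - (x' - y')| ≤ |x - x'| + |y - y'| := by
    rw [show (x - y) - (x' - y') = (x - x') - (y - y') by ring]; exact abs_sub _ _
  have hprod : |x * y - x' * y'| ≤ |x - x'| + 2 * |y - y'| := by
    rw [show x * y - x' * y' = (x - x') * y + x' * (y - y') by ring]
    refine (abs_add_le _ _).trans ?_
    rw [abs_mul, abs_mul]
    nlinarith [abs_nonneg (x - x'), abs_nonneg (y - y')]
  have eadd := hErr (u := x + y) (v := x' + y') (by linarith [abs_add_le x y])
    (by linarith [abs_add_le x' y'])
  have esub := hErr (u := x - y) (v := x' - y') (by linarith [abs_sub x y])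
    (by linarith [abs_sub x' y'])
  have eadd' := eadd.trans (mul_le_mul_of_nonneg_left hsum hh)
  have esub' := esub.trans (mul_le_mul_of_nonneg_left hdiff hh)
  rw [approxMul_eq hN (by linarith), approxMul_eq hN (by linarith)]
  rw [show 1 / (2 * (N : ℝ)) = 1 / N / 2 by ring]
  set η : ℝ := 1 / N
  rw [abs_le] at eadd' esub' hprod ⊢
  constructor <;> linarith

end ApproxMul

section ResetScan

variable (S : Finset ℕ) (μ : ℝ → ℝ → ℝ)

def resetScan (x : ℕ → ℝ) : ℕ → ℝ
  | 0 => x 0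
  | t + 1 => if t + 1 ∈ S then x (t + 1) else μ (resetScan x t) (x (t + 1))

variable {S μ} {x : ℕ → ℝ}

lemma resetScan_of_mem {s : ℕ} (hs : s ∈ S) : resetScan S μ x s = x s := by
  cases s with
  | zero => rfl
  | succ t => simp [resetScan, hs]

lemma resetScan_succ_of_notMem {t : ℕ} (ht : t + 1 ∉ S) :
    resetScan S μ x (t + 1) = μ (resetScan S μ x t) (x (t + 1)) := by
  simp [resetScan, ht]

variable {δ : ℝ} (hμ : ∀ a b, |a| ≤ 2 → |b| ≤ 1 → |μ a b - a * b| ≤ δ) (hx : ∀ j, |x j| ≤ 1)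
include hμ hx

lemma abs_resetScan_le {t : ℕ} (ht : t * δ ≤ 1) : |resetScan S μ x t| ≤ 1 + t * δ := by
  have hδ0 : 0 ≤ δ := (abs_nonneg _).trans (hμ 0 0 (by norm_num) (by norm_num))
  induction t with
  | zero => simpa [resetScan] using hx 0
  | succ t ih =>
    have ih := ih (le_trans (by gcongr; simp) ht)
    rw [resetScan]
    split_ifs
    · exact (hx _).trans (by push_cast; nlinarith)
    · have hZ : |resetScan S μ x t| ≤ 2 := by push_cast at ht; nlinarith
      have hprod : |resetScan S μ x t * x (t + 1)| ≤ |resetScan S μ x t| := by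
        rw [abs_mul]; exact mul_le_of_le_one_right (abs_nonneg _) (hx _)
      have := abs_sub_abs_le_abs_sub (μ (resetScan S μ x t) (x (t + 1)))
        (resetScan S μ x t * x (t + 1))
      push_cast
      linarith [hμ _ _ hZ (hx (t + 1))]

lemma abs_resetScan_sub_prod_le {s l : ℕ} (hs : s ∈ S) (hgap : ∀ i, 0 < i → i ≤ l → s + i ∉ S)
    (hδ : (s + l) * δ ≤ 1) :
    |resetScan S μ x (s + l) - ∏ i ∈ range (l + 1), x (s + i)| ≤ l * δ := by
  have hδ0 : 0 ≤ δ := (abs_nonneg _).trans (hμ 0 0 (by norm_num) (by norm_num))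
  induction l with
  | zero => simp [resetScan_of_mem hs]
  | succ l ih =>
    have hδ' : ((s + l : ℕ) : ℝ) * δ ≤ 1 := by push_cast at hδ ⊢; nlinarith
    have ih := ih (fun i hi hil => hgap i hi (by omega)) (by exact_mod_cast hδ')
    have hZ : |resetScan S μ x (s + l)| ≤ 2 := by
      linarith [abs_resetScan_le (S := S) hμ hx hδ']
    set P := ∏ i ∈ range (l + 1), x (s + i)
    have hnot : s + l + 1 ∉ S := hgap (l + 1) (by omega) le_rfl
    rw [← add_assoc, resetScan_succ_of_notMem hnot, prod_range_succ, ← add_assoc]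
    set Z := resetScan S μ x (s + l)
    set b := x (s + l + 1)
    calc |μ Z b - P * b| ≤ |μ Z b - Z * b| + |Z - P| * |b| := by
          rw [show μ Z b - P * b = (μ Z b - Z * b) + (Z - P) * b by ring, ← abs_mul]
          exact abs_add_le _ _
      _ ≤ δ + l * δ * 1 :=
          add_le_add (hμ _ _ hZ (hx _)) (mul_le_mul ih (hx _) (abs_nonneg _) (by positivity))
      _ = ((l + 1 : ℕ) : ℝ) * δ := by push_cast; ring

lemma abs_resetScan_sub_resetScan_le {y : ℕ → ℝ} (hy : ∀ j, |y j| ≤ 1) {η M : ℝ}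
    (hlip : ∀ a a' b b', |a| ≤ 2 → |a'| ≤ 2 → |b| ≤ 1 → |b'| ≤ 1 →
      |μ a b - μ a' b'| ≤ (1 + η) * |a - a'| + (2 + η) * |b - b'|)
    (hxy : ∀ j, |x j - y j| ≤ M) {s l : ℕ} (hs : s ∈ S)
    (hgap : ∀ i, 0 < i → i ≤ l → s + i ∉ S) (hδ : (s + l) * δ ≤ 1) (hη0 : 0 ≤ η)
    (hη : η * (4 * l + 1) ≤ 2) :
    |resetScan S μ x (s + l) - resetScan S μ y (s + l)| ≤ 4 * (l + 1) * M := by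
  have hM : 0 ≤ M := (abs_nonneg _).trans (hxy 0)
  have hδ0 : 0 ≤ δ := (abs_nonneg _).trans (hμ 0 0 (by norm_num) (by norm_num))
  induction l with
  | zero => simp only [add_zero, resetScan_of_mem hs]; push_cast; linarith [hxy s]
  | succ l ih =>
    push_cast at hδ hη
    have hδ' : ((s + l : ℕ) : ℝ) * δ ≤ 1 := by push_cast; nlinarith
    have ih := ih (fun i hi hil => hgap i hi (by omega)) (by exact_mod_cast hδ') (by nlinarith)
    have hZx : |resetScan S μ x (s + l)| ≤ 2 := by
      linarith [abs_resetScan_le (S := S) hμ hx hδ']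
    have hZy : |resetScan S μ y (s + l)| ≤ 2 := by
      linarith [abs_resetScan_le (S := S) hμ hy hδ']
    have hnot : s + l + 1 ∉ S := hgap (l + 1) (by omega) le_rfl
    rw [← add_assoc, resetScan_succ_of_notMem hnot, resetScan_succ_of_notMem hnot]
    refine (hlip _ _ _ _ hZx hZy (hx _) (hy _)).trans ?_
    have h₁ := mul_le_mul_of_nonneg_left ih (by linarith : 0 ≤ 1 + η)
    have h₂ := mul_le_mul_of_nonneg_left (hxy (s + l + 1)) (by linarith : 0 ≤ 2 + η)
    push_cast
    nlinarith

end ResetScan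

def coordRow (i : ℕ) : ℕ → ℝ := Pi.single i 1

lemma sum_range_coordRow_mul {n i : ℕ} (hi : i < n) (v : ℕ → ℝ) :
    ∑ j ∈ range n, coordRow i j * v j = v i := by
  simp [coordRow, Pi.single_apply, hi]

section ScanNet

variable (d N : ℕ) (S : Finset ℕ)

def hingeKnot (r : ℕ) : ℝ := -4 + r * (1 / N)

/- Layer `2t + 1` holds the slots `slotVal t`: the scan values up to position `t` and the inputs
after it, shifted by `2` so that the ReLU acts on them as the identity. Layer `2t + 2` adds the
`8N + 8N` hinges `hingeVal t` at `Z t ± x (t + 1)`, from which the next layer reads off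
`Z (t + 1) = approxMul N (Z t) (x (t + 1))` unless `t + 1` is a restart. -/
def scanWidth (m k : ℕ) : ℕ :=
  if k = 2 * d then m else if k % 2 = 1 ∨ k = 0 then d else d + 8 * N + 8 * N

def hingeRow (t i j : ℕ) : ℝ :=
  if i < d then coordRow i j
  else if i < d + 8 * N then coordRow t j + coordRow (t + 1) j
  else coordRow t j - coordRow (t + 1) j

def hingeBias (i : ℕ) : ℝ :=
  if i < d then 0
  else if i < d + 8 * N then -4 - hingeKnot N (i - d)
  else -hingeKnot N (i - d - 8 * N)

def mulRow (j : ℕ) : ℝ :=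
  if j < d then 0
  else if j < d + 8 * N then sqInterpCoeff (-4) (1 / N) (j - d) / 4
  else -(sqInterpCoeff (-4) (1 / N) (j - d - 8 * N) / 4)

def scanWeight {m : ℕ} (e : Fin m → ℕ) (k i j : ℕ) : ℝ :=
  if k = 2 * d - 1 then (if h : i < m then coordRow (e ⟨i, h⟩) j else 0)
  else if k = 0 then coordRow i j
  else if k % 2 = 1 then hingeRow d N (k / 2) i j
  else if i = k / 2 ∧ k / 2 ∉ S then mulRow d N j
  else coordRow i j

def scanBias (k i : ℕ) : ℝ :=
  if k = 2 * d - 1 then -2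
  else if k = 0 then 2
  else if k % 2 = 1 then hingeBias d N i
  else if i = k / 2 ∧ k / 2 ∉ S then 2
  else 0

def scanNet {m : ℕ} (e : Fin m → ℕ) : DNN :=
  DNN.ofFun (2 * d - 1) (scanWidth d N m) (scanWeight d N S e) (scanBias d N S)

variable (x : ℕ → ℝ)

def slotVal (t j : ℕ) : ℝ :=
  (if j ≤ t then resetScan S (approxMul N) x j else x j) + 2

def hingeVal (t j : ℕ) : ℝ :=
  if j < d then slotVal N S x t j
  else if j < d + 8 * N then
    max (resetScan S (approxMul N) x t + x (t + 1) - hingeKnot N (j - d)) 0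
  else max (resetScan S (approxMul N) x t - x (t + 1) - hingeKnot N (j - d - 8 * N)) 0

def scanLayerVal (k j : ℕ) : ℝ :=
  if k = 0 then x j
  else if k % 2 = 1 then slotVal N S x (k / 2) j
  else hingeVal d N S x (k / 2 - 1) j

variable {d N S x}

lemma sum_mulRow_mul_hingeVal (t : ℕ) :
    ∑ j ∈ range (d + 8 * N + 8 * N), mulRow d N j * hingeVal d N S x t j
      = approxMul N (resetScan S (approxMul N) x t) (x (t + 1)) := by
  set Z := resetScan S (approxMul N) x t
  have hslots : ∑ j ∈ range d, mulRow d N j * hingeVal d N S x t j = 0 :=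
    sum_eq_zero fun j hj => by simp [mulRow, mem_range.1 hj]
  have hadd : ∀ r ∈ range (8 * N), mulRow d N (d + r) * hingeVal d N S x t (d + r)
      = sqInterpCoeff (-4) (1 / N) r / 4 * max (Z + x (t + 1) - (-4 + r * (1 / N))) 0 :=
    fun r hr => by simp [mulRow, hingeVal, hingeKnot, mem_range.1 hr, Z]
  have hsub : ∀ r ∈ range (8 * N),
      mulRow d N (d + 8 * N + r) * hingeVal d N S x t (d + 8 * N + r)
        = -(sqInterpCoeff (-4) (1 / N) r / 4 * max (Z - x (t + 1) - (-4 + r * (1 / N))) 0) :=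
    fun r _ => by
      have h₀ : ¬ d + 8 * N + r < d := by omega
      have h₁ : ¬ d + 8 * N + r < d + 8 * N := by omega
      have h₂ : d + 8 * N + r - d - 8 * N = r := by omega
      simp [mulRow, hingeVal, hingeKnot, h₀, h₁, h₂, Z]
  rw [sum_range_add, sum_range_add, hslots, sum_congr rfl hadd, sum_congr rfl hsub,
    sum_neg_distrib, approxMul, sqInterp, sqInterp]
  simp only [div_mul_eq_mul_div, ← sum_div]
  ring

section LayerValues

variable (hx : ∀ j < d, -2 ≤ x j) (hZ : ∀ j < d, -2 ≤ resetScan S (approxMul N) x j)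
include hx hZ

lemma slotVal_nonneg (t : ℕ) {j : ℕ} (hj : j < d) : 0 ≤ slotVal N S x t j := by
  unfold slotVal
  split_ifs
  · linarith [hZ j hj]
  · linarith [hx j hj]

lemma hingeVal_eq {t : ℕ} (ht : t + 1 < d) (i : ℕ) :
    hingeVal d N S x t i
      = max (∑ j ∈ range d, hingeRow d N t i j * slotVal N S x t j + hingeBias d N i) 0 := by
  have hslot_t : slotVal N S x t t = resetScan S (approxMul N) x t + 2 := by simp [slotVal]
  have hslot_succ : slotVal N S x t (t + 1) = x (t + 1) + 2 := by simp [slotVal]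
  simp only [hingeVal, hingeRow, hingeBias]
  split_ifs with h₁ h₂
  · rw [sum_range_coordRow_mul h₁, add_zero, max_eq_left (slotVal_nonneg hx hZ t h₁)]
  · simp only [add_mul, sum_add_distrib, sum_range_coordRow_mul (by omega : t < d),
      sum_range_coordRow_mul ht, hslot_t, hslot_succ]
    ring_nf
  · simp only [sub_mul, sum_sub_distrib, sum_range_coordRow_mul (by omega : t < d),
      sum_range_coordRow_mul ht, hslot_t, hslot_succ]
    ring_nf

lemma slotVal_succ_eq {t i : ℕ} (ht : t + 1 < d) (hi : i < d) :
    slotVal N S x (t + 1) i = max (∑ j ∈ range (d + 8 * N + 8 * N),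
        (if i = t + 1 ∧ t + 1 ∉ S then mulRow d N j else coordRow i j) * hingeVal d N S x t j
        + if i = t + 1 ∧ t + 1 ∉ S then 2 else 0) 0 := by
  split_ifs with hmul
  · obtain ⟨rfl, hnot⟩ := hmul
    rw [sum_mulRow_mul_hingeVal, ← resetScan_succ_of_notMem (μ := approxMul N) (x := x) hnot]
    have : slotVal N S x (t + 1) (t + 1) = resetScan S (approxMul N) x (t + 1) + 2 := by
      simp [slotVal]
    rw [this, max_eq_left (by linarith [hZ (t + 1) ht])]
  · have hkeep : slotVal N S x (t + 1) i = slotVal N S x t i := by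
      by_cases hit : i = t + 1
      · subst hit
        have hmem : t + 1 ∈ S := by tauto
        simp [slotVal, resetScan_of_mem hmem]
      · simp [slotVal, show i ≤ t + 1 ↔ i ≤ t by omega]
    rw [sum_range_coordRow_mul (by omega), add_zero, hkeep, hingeVal, if_pos hi,
      max_eq_left (slotVal_nonneg hx hZ t hi)]

lemma scanLayerVal_succ (hd : 0 < d) {m : ℕ} (e : Fin m → ℕ) {k : ℕ} (hk : k < 2 * d - 1)
    {i : ℕ} (hi : i < scanWidth d N m (k + 1)) :
    scanLayerVal d N S x (k + 1) i = max (∑ j ∈ range (scanWidth d N m k),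
      scanWeight d N S e k i j * scanLayerVal d N S x k j + scanBias d N S k i) 0 := by
  obtain rfl | ⟨t, rfl | rfl⟩ : k = 0 ∨ ∃ t, k = 2 * t + 1 ∨ k = 2 * t + 2 := by
    rcases k with _ | k
    · exact .inl rfl
    · exact .inr ⟨k / 2, by omega⟩
  · have hi : i < d := by simpa [scanWidth, show 1 ≠ 2 * d by omega] using hi
    have h₀ : (0 : ℕ) ≠ 2 * d - 1 := by omega
    have hslot : slotVal N S x 0 i = x i + 2 := by
      rcases i with _ | i <;> simp [slotVal, resetScan]
    have h₁ : (0 : ℕ) ≠ 2 * d := by omega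
    simp only [scanLayerVal, scanWidth, scanWeight, scanBias, if_neg h₀, if_neg h₁, zero_add,
      Nat.one_mod, Nat.zero_mod, Nat.reduceDiv, or_true, one_ne_zero, ↓reduceIte]
    rw [sum_range_coordRow_mul hi, hslot, max_eq_left (by linarith [hx i hi])]
  · have ht : t + 1 < d := by omega
    have h₀ : 2 * t + 1 ≠ 2 * d - 1 := by omega
    have h₁ : 2 * t + 1 ≠ 2 * d := by omega
    have h₂ : 2 * t + 1 + 1 ≠ 2 * d := by omega
    simp only [scanLayerVal, scanWidth, scanWeight, scanBias, if_neg h₀, if_neg h₁,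
      show (2 * t + 1) % 2 = 1 by omega, show (2 * t + 1 + 1) % 2 = 0 by omega,
      show (2 * t + 1) / 2 = t by omega, show (2 * t + 1 + 1) / 2 = t + 1 by omega,
      Nat.add_sub_cancel, true_or, add_eq_zero, one_ne_zero, and_false, zero_ne_one, ↓reduceIte]
    exact hingeVal_eq hx hZ ht i
  · have ht : t + 1 < d := by omega
    have h₀ : 2 * t + 2 ≠ 2 * d - 1 := by omega
    have h₁ : 2 * t + 2 ≠ 2 * d := by omega
    have h₂ : 2 * t + 2 + 1 ≠ 2 * d := by omega
    have hi : i < d := by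
      simpa [scanWidth, h₂, show (2 * t + 2 + 1) % 2 = 1 by omega] using hi
    simp only [scanLayerVal, scanWidth, scanWeight, scanBias, if_neg h₀, if_neg h₁,
      show (2 * t + 2) % 2 = 0 by omega, show (2 * t + 2 + 1) % 2 = 1 by omega,
      show (2 * t + 2) / 2 = t + 1 by omega, show (2 * t + 2 + 1) / 2 = t + 1 by omega,
      Nat.add_sub_cancel, add_eq_zero, one_ne_zero, and_false, zero_ne_one, OfNat.ofNat_ne_zero,
      or_self, ↓reduceIte]
    exact slotVal_succ_eq hx hZ ht hi

lemma scanNet_realize (hd : 0 < d) {m : ℕ} (e : Fin m → ℕ) (he : ∀ i, e i < d)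
    {xin : Fin (scanWidth d N m 0) → ℝ} (hxin : ∀ j : Fin (scanWidth d N m 0), xin j = x j)
    (i : Fin (scanWidth d N m (2 * d - 1 + 1))) (hi : (i : ℕ) < m) :
    (scanNet d N S e).realize xin i = resetScan S (approxMul N) x (e ⟨i, hi⟩) := by
  refine (DNN.realize_ofFun (W := scanWeight d N S e) (b := scanBias d N S)
    (V := scanLayerVal d N S x) hxin
    (fun k hk i hi => scanLayerVal_succ hx hZ hd e hk hi) i).trans ?_
  have hlast : 2 * d - 1 ≠ 0 ∧ (2 * d - 1) % 2 = 1 ∧ (2 * d - 1) / 2 = d - 1 ∧ 2 * d - 1 ≠ 2 * d :=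
    ⟨by omega, by omega, by omega, by omega⟩
  have hwidth : scanWidth d N m (2 * d - 1) = d := by simp [scanWidth, hlast]
  simp only [scanWeight, scanBias, scanLayerVal, hlast, hi, ↓reduceIte, ↓reduceDIte]
  rw [hwidth, sum_range_coordRow_mul (he _), slotVal, if_pos (by have := he ⟨i, hi⟩; omega)]
  ring

end LayerValues

end ScanNet

section ScanNetSize

variable {d N : ℕ} (S : Finset ℕ) {m : ℕ} (e : Fin m → ℕ)

lemma scanNet_width_zero (hd : 0 < d) : (scanNet d N S e).ℓ 0 = d := by
  show scanWidth d N m 0 = d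
  simp [scanWidth]; omega

lemma scanNet_width_last (hd : 0 < d) : (scanNet d N S e).ℓ ((scanNet d N S e).L + 1) = m := by
  show scanWidth d N m (2 * d - 1 + 1) = m
  rw [show 2 * d - 1 + 1 = 2 * d by omega, scanWidth, if_pos rfl]

lemma scanNet_params_le (hd : 0 < d) (hm : m ≤ d) :
    (scanNet d N S e).params ≤ 2 * d * ((d + 16 * N + 1) * (d + 1)) := by
  have hle : ∀ k, scanWidth d N m k ≤ d + 16 * N := fun k => by
    unfold scanWidth; split_ifs <;> omega
  -- wide hinge layers only ever sit next to narrow ones, so the count is linear in `N`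
  have hnarrow : ∀ k, scanWidth d N m k ≤ d ∨ scanWidth d N m (k + 1) ≤ d := fun k => by
    unfold scanWidth; split_ifs <;> omega
  refine (DNN.params_le (B := (d + 16 * N + 1) * (d + 1)) fun k _ => ?_).trans ?_
  · show scanWidth d N m (k + 1) * (scanWidth d N m k + 1) ≤ _
    rcases hnarrow k with h | h
    · nlinarith [hle (k + 1)]
    · nlinarith [hle k]
  · show (2 * d - 1 + 1) * _ ≤ _
    exact Nat.mul_le_mul_right _ (by omega)

end ScanNetSize

def padZero {d : ℕ} (x : Fin d → ℝ) (j : ℕ) : ℝ := if h : j < d then x ⟨j, h⟩ else 0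

lemma abs_padZero_le {d : ℕ} {x : Fin d → ℝ} (hx : x ∈ cube d (-1) 1) (j : ℕ) :
    |padZero x j| ≤ 1 := by
  unfold padZero
  split_ifs with h
  · exact abs_le.2 ⟨hx.1 ⟨j, h⟩, hx.2 ⟨j, h⟩⟩
  · simp

lemma abs_padZero_sub_le {p : ℝ≥0∞} (hp : 1 ≤ p) {d : ℕ} (x y : Fin d → ℝ) (j : ℕ) :
    |padZero x j - padZero y j| ≤ lpNorm p (x - y) := by
  unfold padZero
  split_ifs with h
  · exact abs_le_lpNorm hp (x - y) ⟨j, h⟩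
  · simpa using lpNorm_nonneg hp (x - y)


lemma abs_resetScan_approxMul_le {N : ℕ} (hN : 0 < N) (S : Finset ℕ) {x : ℕ → ℝ}
    (hx : ∀ j, |x j| ≤ 1) {j : ℕ} (hj : j ≤ 2 * N) : |resetScan S (approxMul N) x j| ≤ 2 := by
  have hjN : (j : ℝ) * (1 / (2 * N)) ≤ 1 := by
    rw [mul_one_div, div_le_one (by positivity)]; exact_mod_cast hj
  linarith [abs_resetScan_le (S := S) (abs_approxMul_sub_mul_le_of_abs_le hN) hx hjN]

lemma scanNet_toFun_eq {d N m : ℕ} (hd : 0 < d) (hdN : d ≤ 2 * N) (S : Finset ℕ)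
    {e : Fin m → ℕ} (he : ∀ i, e i < d) {x : Fin d → ℝ} (hx : x ∈ cube d (-1) 1) (i : Fin m) :
    (scanNet d N S e).toFun (scanNet_width_zero S e hd) (scanNet_width_last S e hd) x i
      = resetScan S (approxMul N) (padZero x) (e i) := by
  have hN : 0 < N := by omega
  have hx' := abs_padZero_le hx
  refine scanNet_realize (fun j _ => by linarith [abs_le.1 (hx' j)])
    (fun j hj => by linarith [abs_le.1 (abs_resetScan_approxMul_le hN S hx' (j := j) (by omega))])
    hd e he (fun j => ?_) _ i.2
  have hj : (j : ℕ) < d := lt_of_lt_of_eq j.2 (scanNet_width_zero S e hd)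
  simp [padZero, hj]
  rfl

section Blocks

variable {m : ℕ} (dims : Fin m → ℕ)

def blockStart (i : Fin m) : ℕ := ∑ j ∈ univ.filter (· < i), dims j

def blockStarts : Finset ℕ := univ.image (blockStart dims)

variable {dims}

lemma blockStart_add_le_of_lt {i i' : Fin m} (h : i < i') :
    blockStart dims i + dims i ≤ blockStart dims i' := by
  unfold blockStart
  rw [add_comm, ← sum_insert (by simp : i ∉ univ.filter (· < i))]
  exact sum_le_sum_of_subset fun j => by
    simp only [mem_insert, mem_filter, mem_univ, true_and]
    rintro (rfl | hj) <;> [exact h; exact hj.trans h]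

lemma blockStart_add_le_sum (i : Fin m) : blockStart dims i + dims i ≤ ∑ j, dims j := by
  unfold blockStart
  rw [add_comm, ← sum_insert (by simp : i ∉ univ.filter (· < i))]
  exact sum_le_sum_of_subset (subset_univ _)

lemma blockStart_add_notMem {i : Fin m} {l : ℕ} (hl0 : 0 < l) (hl : l < dims i) :
    blockStart dims i + l ∉ blockStarts dims := by
  simp only [blockStarts, mem_image, mem_univ, true_and, not_exists]
  intro i' heq
  rcases lt_trichotomy i' i with h | rfl | h
  · linarith [blockStart_add_le_of_lt (dims := dims) h]
  · omega
  · linarith [blockStart_add_le_of_lt (dims := dims) h]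

variable {N : ℕ} (hN : 0 < N) (hdN : ∑ j, dims j ≤ N) (hpos : ∀ i, 0 < dims i)
  {x : ℕ → ℝ} (hx : ∀ j, |x j| ≤ 1) (i : Fin m)
include hN hdN hpos hx

lemma abs_resetScan_blockEnd_sub_prod_le :
    |resetScan (blockStarts dims) (approxMul N) x (blockStart dims i + (dims i - 1))
      - ∏ l ∈ range (dims i), x (blockStart dims i + l)| ≤ (∑ j, dims j : ℕ) / (2 * N) := by
  have hend := blockStart_add_le_sum (dims := dims) i
  have h := abs_resetScan_sub_prod_le (abs_approxMul_sub_mul_le_of_abs_le hN) hx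
    (mem_image_of_mem _ (mem_univ i)) (l := dims i - 1)
    (fun l hl0 hl => blockStart_add_notMem (dims := dims) hl0 (by have := hpos i; omega))
    (by rw [mul_one_div, div_le_one (by positivity)]; exact_mod_cast (by omega))
  rw [Nat.sub_add_cancel (hpos i)] at h
  refine h.trans ?_
  rw [mul_one_div]
  gcongr
  exact_mod_cast (by omega)

lemma abs_resetScan_blockEnd_sub_le {y : ℕ → ℝ} (hy : ∀ j, |y j| ≤ 1) {M : ℝ}
    (hxy : ∀ j, |x j - y j| ≤ M) :
    |resetScan (blockStarts dims) (approxMul N) x (blockStart dims i + (dims i - 1))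
      - resetScan (blockStarts dims) (approxMul N) y (blockStart dims i + (dims i - 1))|
      ≤ 4 * (∑ j, dims j : ℕ) * M := by
  have hend := blockStart_add_le_sum (dims := dims) i
  have hM : 0 ≤ M := (abs_nonneg _).trans (hxy 0)
  have h := abs_resetScan_sub_resetScan_le (abs_approxMul_sub_mul_le_of_abs_le hN) hx hy
    (fun a a' b b' ha ha' hb hb' => abs_approxMul_sub_le hN ha ha' hb hb') hxy
    (mem_image_of_mem _ (mem_univ i)) (l := dims i - 1)
    (fun l hl0 hl => blockStart_add_notMem (dims := dims) hl0 (by have := hpos i; omega))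
    (by rw [mul_one_div, div_le_one (by positivity)]; exact_mod_cast (by omega))
    (by positivity)
    (by
      rw [one_div_mul_eq_div, div_le_iff₀ (by positivity)]
      have : ((dims i - 1 : ℕ) : ℝ) + 1 ≤ N := by exact_mod_cast (by omega)
      linarith)
  refine h.trans ?_
  gcongr
  exact_mod_cast (by have := hpos i; omega)

end Blocks

lemma prod_blockIdx_eq {d m : ℕ} {dims : Fin m → ℕ} (hsum : ∑ j, dims j = d) (x : Fin d → ℝ)
    (i : Fin m) :
    ∏ l : Fin (dims i), x (Fin.cast hsum (blockIdx dims i l))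
      = ∏ l ∈ range (dims i), padZero x (blockStart dims i + l) := by
  rw [← Fin.prod_univ_eq_prod_range]
  refine prod_congr rfl fun l _ => ?_
  have hl : blockStart dims i + l < d := by
    have := blockStart_add_le_sum (dims := dims) i; omega
  simp only [padZero, hl, dite_true]
  rfl

lemma cost_memProdClass_le {p : ℝ≥0∞} (hp : 1 ≤ p) {d m N : ℕ} (hd : 0 < d) (hdN : d ≤ N)
    {f : (Fin d → ℝ) → Fin m → ℝ} (hf : MemProdClass (-1) 1 f) {L ε : ℝ}
    (hL : 4 * (d : ℝ) ^ 2 ≤ L) (hε : (d : ℝ) ^ 2 ≤ 2 * N * ε) :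
    Cost p (cube d (-1) 1) f L ε ≤ (2 * d * ((d + 16 * N + 1) * (d + 1)) : ℕ) := by
  obtain ⟨dims, hsum, hpos, hprod⟩ := hf
  have hm : m ≤ d := hsum ▸ by
    simpa using sum_le_sum fun i (_ : i ∈ univ) => Nat.one_le_iff_ne_zero.2 (hpos i).ne'
  have hN : 0 < N := by omega
  have hdN' : ∑ j, dims j ≤ N := hsum ▸ hdN
  let blockEnd (i : Fin m) : ℕ := blockStart dims i + (dims i - 1)
  have he : ∀ i, blockEnd i < d := fun i => by
    have := blockStart_add_le_sum (dims := dims) i; have := hpos i; simp only [blockEnd]; omega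
  have hg := fun {x : Fin d → ℝ} (hx : x ∈ cube d (-1) 1) =>
    scanNet_toFun_eq (N := N) hd (by omega) (blockStarts dims) he hx
  refine (cost_le_params (DNN.realizes_toFun _ (scanNet_width_zero _ blockEnd hd)
    (scanNet_width_last _ blockEnd hd)) (fun x hx => ?_) (fun x hx y hy => ?_)).trans
    (by exact_mod_cast scanNet_params_le (N := N) (blockStarts dims) blockEnd hd hm)
  · refine (lpNorm_le_mul hp (c := d / (2 * N)) fun i => ?_).trans ?_
    · rw [Pi.sub_apply, hg hx, hprod x hx, prod_blockIdx_eq hsum]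
      exact (abs_resetScan_blockEnd_sub_prod_le hN hdN' hpos (abs_padZero_le hx) i).trans_eq
        (by rw [hsum])
    · calc (m : ℝ) * (d / (2 * N)) ≤ d * (d / (2 * N)) := by gcongr
        _ ≤ ε := by rw [mul_div_assoc', div_le_iff₀ (by positivity)]; nlinarith
  · refine (lpNorm_le_mul hp (c := 4 * d * lpNorm p (x - y)) fun i => ?_).trans ?_
    · rw [Pi.sub_apply, hg hx, hg hy]
      exact (abs_resetScan_blockEnd_sub_le hN hdN' hpos (abs_padZero_le hx) i (abs_padZero_le hy)
        (abs_padZero_sub_le hp x y)).trans_eq (by rw [hsum])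
    · have hM := lpNorm_nonneg hp (x - y)
      calc (m : ℝ) * (4 * d * lpNorm p (x - y)) ≤ d * (4 * d * lpNorm p (x - y)) := by
            gcongr
        _ ≤ L * lpNorm p (x - y) := by nlinarith

lemma cost_memProdClass_le_ofReal {p : ℝ≥0∞} (hp : 1 ≤ p) {d m : ℕ} (hd : 0 < d) {ε : ℝ}
    (hε : 0 < ε) (hε1 : ε ≤ 1) {f : (Fin d → ℝ) → Fin m → ℝ} (hf : MemProdClass (-1) 1 f) {L : ℝ}
    (hL : 4 * (d : ℝ) ^ 2 ≤ L) :
    Cost p (cube d (-1) 1) f L ε ≤ ENNReal.ofReal (136 * d ^ 4 * ε⁻¹) := by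
  have hd1 : (1 : ℝ) ≤ d := by exact_mod_cast hd
  have hεinv : 1 ≤ ε⁻¹ := one_le_inv₀ hε |>.2 hε1
  set c := ⌈ε⁻¹⌉₊
  have hc : ε⁻¹ ≤ c ∧ (c : ℝ) ≤ 2 * ε⁻¹ :=
    ⟨Nat.le_ceil _, by linarith [Nat.ceil_lt_add_one (by positivity : 0 ≤ ε⁻¹)]⟩
  have hdN : d ≤ d ^ 2 * c := by
    nlinarith [Nat.one_le_ceil_iff.2 (by positivity : 0 < ε⁻¹)]
  have hε' : (d : ℝ) ^ 2 ≤ 2 * (d ^ 2 * c : ℕ) * ε := by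
    have hcε : 1 ≤ c * ε := by
      simpa [inv_mul_cancel₀ hε.ne'] using mul_le_mul_of_nonneg_right hc.1 hε.le
    push_cast; nlinarith [mul_le_mul_of_nonneg_left hcε (sq_nonneg (d : ℝ))]
  refine (cost_memProdClass_le hp hd hdN hf hL hε').trans ?_
  rw [← ENNReal.ofReal_natCast]
  refine ENNReal.ofReal_le_ofReal ?_
  have hd2 : (d : ℝ) ≤ d ^ 2 := by nlinarith
  have hwidth : (d : ℝ) + 16 * (d ^ 2 * c) + 1 ≤ 34 * d ^ 2 * ε⁻¹ := by nlinarith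
  calc ((2 * d * ((d + 16 * (d ^ 2 * c) + 1) * (d + 1)) : ℕ) : ℝ)
      ≤ 2 * d * ((34 * d ^ 2 * ε⁻¹) * (2 * d)) := by push_cast; gcongr; linarith
    _ = 136 * d ^ 4 * ε⁻¹ := by ring

/-- **Corollary 3.7**: approximation of parallelized product functions on `[-1,1]^d`
with Lipschitz constant `√32 d³` at cost `≤ K d^K ε⁻¹`. -/
theorem parallelized_product_approx :
    ∃ K : ℕ, 0 < K ∧
      ∀ d : ℕ, 0 < d → ∀ ε : ℝ, 0 < ε → ε ≤ 1 → ∀ p : ℝ≥0∞, 1 ≤ p →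
      ∀ (m : ℕ) (f : (Fin d → ℝ) → (Fin m → ℝ)),
        MemProdClass (-1) 1 f →
        Cost p (cube d (-1) 1) f (Real.sqrt 32 * (d : ℝ) ^ 3) ε ≤
          ENNReal.ofReal ((K : ℝ) * (d : ℝ) ^ K * ε⁻¹) := by
  refine ⟨136, by norm_num, fun d hd ε hε hε1 p hp m f hf => ?_⟩
  have hd1 : (1 : ℝ) ≤ d := by exact_mod_cast hd
  have hL : 4 * (d : ℝ) ^ 2 ≤ Real.sqrt 32 * d ^ 3 := by
    have : (4 : ℝ) ≤ Real.sqrt 32 := Real.le_sqrt_of_sq_le (by norm_num)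
    nlinarith [pow_le_pow_right₀ hd1 (by norm_num : 2 ≤ 3)]
  refine (cost_memProdClass_le_ofReal hp hd hε hε1 hf hL).trans (ENNReal.ofReal_le_ofReal ?_)
  gcongr <;> norm_num

end
end
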